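/- arXiv:1602.05330 — 11 statements merged into one kernel-verified Lean document; each statement's English description precedes it below -/
import Mathlib

section
/- If m is subadditive, then its variation m̄ is finitely additive on the algebra A: for disjoint A, B ∈ A, m̄(A ∪ B) = m̄(A) + m̄(B). -/
open Set ENNReal

variable {T : Type*}

/-- `𝒜` is an algebra of subsets of `T`. -/
def IsSetAlgebra' (𝒜 : Set (Set T)) : Prop :=
  ∅ ∈ 𝒜 ∧ (∀ A ∈ 𝒜, Aᶜ ∈ 𝒜) ∧ ∀ A ∈ 𝒜, ∀ B ∈ 𝒜, A ∪ B ∈ 𝒜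

/-- `m` is monotone on `𝒜`. -/
def MonoSF (m : Set T → ℝ) (𝒜 : Set (Set T)) : Prop :=
  ∀ A ∈ 𝒜, ∀ B ∈ 𝒜, A ⊆ B → m A ≤ m B

/-- `m` is subadditive on `𝒜`. -/
def SubaddSF (m : Set T → ℝ) (𝒜 : Set (Set T)) : Prop :=
  ∀ A ∈ 𝒜, ∀ B ∈ 𝒜, m (A ∪ B) ≤ m A + m B

/-- `m` is null-additive on `𝒜`. -/
def NullAddSF (m : Set T → ℝ) (𝒜 : Set (Set T)) : Prop :=
  ∀ A ∈ 𝒜, ∀ B ∈ 𝒜, m B = 0 → m (A ∪ B) = m A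

/-- `m` is finitely additive on `𝒜`. -/
def FinAddSF (m : Set T → ℝ) (𝒜 : Set (Set T)) : Prop :=
  ∀ A ∈ 𝒜, ∀ B ∈ 𝒜, Disjoint A B → m (A ∪ B) = m A + m B

/-- The variation `m̄` of `m`: supremum of `Σᵢ m(Aᵢ)` over finite pairwise disjoint
families `{Aᵢ} ⊆ 𝒜` with each `Aᵢ ⊆ E`. -/
noncomputable def variationSF (m : Set T → ℝ) (𝒜 : Set (Set T)) (E : Set T) : ℝ≥0∞ :=
  ⨆ F ∈ {F : Finset (Set T) |
      (∀ A ∈ F, A ∈ 𝒜 ∧ A ⊆ E) ∧ (F : Set (Set T)).PairwiseDisjoint id},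
    ∑ A ∈ F, ENNReal.ofReal (m A)

/-- `A` is an atom of `m`. -/
def IsAtomOf (m : Set T → ℝ) (𝒜 : Set (Set T)) (A : Set T) : Prop :=
  A ∈ 𝒜 ∧ 0 < m A ∧ ∀ B ∈ 𝒜, B ⊆ A → m B = 0 ∨ m (A \ B) = 0

lemma IsSetAlgebra'.inter_mem {𝒜 : Set (Set T)} (h : IsSetAlgebra' 𝒜)
    {A B : Set T} (hA : A ∈ 𝒜) (hB : B ∈ 𝒜) : A ∩ B ∈ 𝒜 := by
  have : A ∩ B = (Aᶜ ∪ Bᶜ)ᶜ := by simp [Set.compl_union]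
  rw [this]
  exact h.2.1 _ (h.2.2 _ (h.2.1 _ hA) _ (h.2.1 _ hB))

/-- Key restriction lemma: a disjoint family's intersected sum is bounded by the
variation on `S`. -/
lemma sum_inter_le_variation {𝒜 : Set (Set T)} {m : Set T → ℝ}
    (halg : IsSetAlgebra' 𝒜) (h0 : m ∅ = 0) {S : Set T} (hS : S ∈ 𝒜)
    {F : Finset (Set T)} (hF𝒜 : ∀ A ∈ F, A ∈ 𝒜)
    (hFd : (F : Set (Set T)).PairwiseDisjoint id) :
    ∑ C ∈ F, ENNReal.ofReal (m (C ∩ S)) ≤ variationSF m 𝒜 S := by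
  classical
  set F₀ := F.filter (fun C => (C ∩ S).Nonempty) with hF₀
  have hsub0 : F₀ ⊆ F := Finset.filter_subset _ _
  have hinj : ∀ C₁ ∈ F₀, ∀ C₂ ∈ F₀, C₁ ∩ S = C₂ ∩ S → C₁ = C₂ := by
    intro C₁ h₁ C₂ h₂ heq
    by_contra hne
    have hd : Disjoint C₁ C₂ := hFd (hsub0 h₁) (hsub0 h₂) hne
    have hne1 : (C₁ ∩ S).Nonempty := (Finset.mem_filter.mp h₁).2
    obtain ⟨x, hx⟩ := hne1
    have hx2 : x ∈ C₂ ∩ S := heq ▸ hx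
    exact hd.ne_of_mem hx.1 hx2.1 rfl
  have hstep : ∑ C ∈ F, ENNReal.ofReal (m (C ∩ S))
      = ∑ C ∈ F₀, ENNReal.ofReal (m (C ∩ S)) := by
    refine (Finset.sum_subset hsub0 ?_).symm
    intro C hC hC0
    have : ¬ (C ∩ S).Nonempty := by
      intro h; exact hC0 (Finset.mem_filter.mpr ⟨hC, h⟩)
    rw [Set.not_nonempty_iff_eq_empty] at this
    simp [this, h0]
  have himg : ∑ C ∈ F₀, ENNReal.ofReal (m (C ∩ S))
      = ∑ A ∈ F₀.image (fun C => C ∩ S), ENNReal.ofReal (m A) :=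
    by rw [Finset.sum_image hinj]
  rw [hstep, himg]
  have hmem : (F₀.image (fun C => C ∩ S)) ∈ {F : Finset (Set T) |
      (∀ A ∈ F, A ∈ 𝒜 ∧ A ⊆ S) ∧ (F : Set (Set T)).PairwiseDisjoint id} := by
    constructor
    · intro A hA
      obtain ⟨C, hC, rfl⟩ := Finset.mem_image.mp hA
      exact ⟨halg.inter_mem (hF𝒜 C (hsub0 hC)) hS, Set.inter_subset_right⟩
    · intro X hX Y hY hne
      obtain ⟨C₁, h₁, rfl⟩ := Finset.mem_image.mp (by exact_mod_cast hX)
      obtain ⟨C₂, h₂, rfl⟩ := Finset.mem_image.mp (by exact_mod_cast hY)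
      have hCne : C₁ ≠ C₂ := fun h => hne (by rw [h])
      have hd : Disjoint C₁ C₂ := hFd (hsub0 h₁) (hsub0 h₂) hCne
      exact (hd.mono Set.inter_subset_left Set.inter_subset_left)
  exact le_iSup₂_of_le _ hmem le_rfl

theorem variation_finitelyAdditive_of_subadditive' (𝒜 : Set (Set T)) (m : Set T → ℝ)
    (halg : IsSetAlgebra' 𝒜) (h0 : m ∅ = 0) (hpos : ∀ A ∈ 𝒜, 0 ≤ m A)
    (hsub : SubaddSF m 𝒜) :
    ∀ A ∈ 𝒜, ∀ B ∈ 𝒜, Disjoint A B →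
      variationSF m 𝒜 (A ∪ B) = variationSF m 𝒜 A + variationSF m 𝒜 B := by
  classical
  intro A hA B hB hAB
  apply le_antisymm
  · -- var (A ∪ B) ≤ var A + var B
    refine iSup₂_le fun F hF => ?_
    obtain ⟨hF1, hF2⟩ := hF
    have hF𝒜 : ∀ C ∈ F, C ∈ 𝒜 := fun C hC => (hF1 C hC).1
    have key : ∀ C ∈ F, ENNReal.ofReal (m C)
        ≤ ENNReal.ofReal (m (C ∩ A)) + ENNReal.ofReal (m (C ∩ B)) := by
      intro C hC
      have hCA : C ∩ A ∈ 𝒜 := halg.inter_mem (hF𝒜 C hC) hA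
      have hCB : C ∩ B ∈ 𝒜 := halg.inter_mem (hF𝒜 C hC) hB
      have hCeq : C = (C ∩ A) ∪ (C ∩ B) := by
        rw [← Set.inter_union_distrib_left, Set.inter_eq_left.mpr (hF1 C hC).2]
      have h1 : m C ≤ m (C ∩ A) + m (C ∩ B) := by
        calc m C = m ((C ∩ A) ∪ (C ∩ B)) := by rw [← hCeq]
        _ ≤ m (C ∩ A) + m (C ∩ B) := hsub _ hCA _ hCB
      calc ENNReal.ofReal (m C) ≤ ENNReal.ofReal (m (C ∩ A) + m (C ∩ B)) :=
            ENNReal.ofReal_le_ofReal h1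
        _ ≤ ENNReal.ofReal (m (C ∩ A)) + ENNReal.ofReal (m (C ∩ B)) :=
            ENNReal.ofReal_add_le
    calc ∑ C ∈ F, ENNReal.ofReal (m C)
        ≤ ∑ C ∈ F, (ENNReal.ofReal (m (C ∩ A)) + ENNReal.ofReal (m (C ∩ B))) :=
          Finset.sum_le_sum key
      _ = (∑ C ∈ F, ENNReal.ofReal (m (C ∩ A)))
          + ∑ C ∈ F, ENNReal.ofReal (m (C ∩ B)) := Finset.sum_add_distrib
      _ ≤ variationSF m 𝒜 A + variationSF m 𝒜 B :=
          add_le_add (sum_inter_le_variation halg h0 hA hF𝒜 hF2)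
            (sum_inter_le_variation halg h0 hB hF𝒜 hF2)
  · -- var A + var B ≤ var (A ∪ B)
    have hne : ({F : Finset (Set T) |
        (∀ A' ∈ F, A' ∈ 𝒜 ∧ A' ⊆ A) ∧ (F : Set (Set T)).PairwiseDisjoint id}).Nonempty :=
      ⟨∅, by simp, by simp⟩
    have hne' : ({F : Finset (Set T) |
        (∀ A' ∈ F, A' ∈ 𝒜 ∧ A' ⊆ B) ∧ (F : Set (Set T)).PairwiseDisjoint id}).Nonempty :=
      ⟨∅, by simp, by simp⟩
    refine ENNReal.biSup_add_biSup_le hne hne' ?_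
    intro FA hFA FB hFB
    obtain ⟨hFA1, hFA2⟩ := hFA
    obtain ⟨hFB1, hFB2⟩ := hFB
    set GA := FA.erase ∅ with hGA
    set GB := FB.erase ∅ with hGB
    have hsumA : ∑ C ∈ FA, ENNReal.ofReal (m C) = ∑ C ∈ GA, ENNReal.ofReal (m C) := by
      refine (Finset.sum_subset (Finset.erase_subset _ _) ?_).symm
      intro C hC hC0
      have : C = ∅ := by
        by_contra h; exact hC0 (Finset.mem_erase.mpr ⟨h, hC⟩)
      simp [this, h0]
    have hsumB : ∑ C ∈ FB, ENNReal.ofReal (m C) = ∑ C ∈ GB, ENNReal.ofReal (m C) := by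
      refine (Finset.sum_subset (Finset.erase_subset _ _) ?_).symm
      intro C hC hC0
      have : C = ∅ := by
        by_contra h; exact hC0 (Finset.mem_erase.mpr ⟨h, hC⟩)
      simp [this, h0]
    have hdisjG : Disjoint GA GB := by
      rw [Finset.disjoint_left]
      intro C hCA hCB
      obtain ⟨hCne, hCA'⟩ := Finset.mem_erase.mp hCA
      obtain ⟨-, hCB'⟩ := Finset.mem_erase.mp hCB
      have h1 : C ⊆ A := (hFA1 C hCA').2
      have h2 : C ⊆ B := (hFB1 C hCB').2
      have : C ⊆ A ∩ B := Set.subset_inter h1 h2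
      rw [Set.disjoint_iff_inter_eq_empty.mp hAB] at this
      exact hCne (Set.subset_empty_iff.mp this)
    have hmem : (GA ∪ GB) ∈ {F : Finset (Set T) |
        (∀ A' ∈ F, A' ∈ 𝒜 ∧ A' ⊆ A ∪ B) ∧ (F : Set (Set T)).PairwiseDisjoint id} := by
      constructor
      · intro C hC
        rcases Finset.mem_union.mp hC with h | h
        · have := hFA1 C (Finset.mem_of_mem_erase h)
          exact ⟨this.1, this.2.trans Set.subset_union_left⟩
        · have := hFB1 C (Finset.mem_of_mem_erase h)
          exact ⟨this.1, this.2.trans Set.subset_union_right⟩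
      · intro X hX Y hY hne''
        have hX' : X ∈ GA ∪ GB := by exact_mod_cast hX
        have hY' : Y ∈ GA ∪ GB := by exact_mod_cast hY
        rcases Finset.mem_union.mp hX' with hx | hx <;>
          rcases Finset.mem_union.mp hY' with hy | hy
        · exact hFA2 (Finset.mem_coe.mpr (Finset.mem_of_mem_erase hx))
            (Finset.mem_coe.mpr (Finset.mem_of_mem_erase hy)) hne''
        · exact hAB.mono (hFA1 X (Finset.mem_of_mem_erase hx)).2
            (hFB1 Y (Finset.mem_of_mem_erase hy)).2
        · exact (hAB.symm).mono (hFB1 X (Finset.mem_of_mem_erase hx)).2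
            (hFA1 Y (Finset.mem_of_mem_erase hy)).2
        · exact hFB2 (Finset.mem_coe.mpr (Finset.mem_of_mem_erase hx))
            (Finset.mem_coe.mpr (Finset.mem_of_mem_erase hy)) hne''
    calc (∑ C ∈ FA, ENNReal.ofReal (m C)) + ∑ C ∈ FB, ENNReal.ofReal (m C)
        = ∑ C ∈ GA ∪ GB, ENNReal.ofReal (m C) := by
          rw [hsumA, hsumB, Finset.sum_union hdisjG]
      _ ≤ variationSF m 𝒜 (A ∪ B) := le_iSup₂_of_le _ hmem le_rfl

/-- If `m` is subadditive, then its variation is finitely additive on `𝒜`. -/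
theorem variation_finitelyAdditive_of_subadditive (𝒜 : Set (Set T)) (m : Set T → ℝ)
    (halg : IsSetAlgebra' 𝒜) (h0 : m ∅ = 0) (hpos : ∀ A ∈ 𝒜, 0 ≤ m A)
    (hsub : SubaddSF m 𝒜) :
    ∀ A ∈ 𝒜, ∀ B ∈ 𝒜, Disjoint A B →
      variationSF m 𝒜 (A ∪ B) = variationSF m 𝒜 A + variationSF m 𝒜 B := variation_finitelyAdditive_of_subadditive' 𝒜 m halg h0 hpos hsub
end

section
/- If m is null-additive, then its variation m̄ is null-additive on A: if A, B ∈ A and m̄(B) = 0, then m̄(A ∪ B) = m̄(A). -/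
open Set ENNReal

variable {T : Type*}

theorem IsSetAlgebra'.isSetAlgebra {𝒜 : Set (Set T)} (h : IsSetAlgebra' 𝒜) :
    MeasureTheory.IsSetAlgebra 𝒜 where
  empty_mem := h.1
  compl_mem _ hs := h.2.1 _ hs
  union_mem _ _ hs ht := h.2.2 _ hs _ ht

section Variation

variable {m : Set T → ℝ} {𝒜 : Set (Set T)}

theorem sum_le_variationSF {E : Set T} {F : Finset (Set T)} (hF : ∀ A ∈ F, A ∈ 𝒜 ∧ A ⊆ E)
    (hdisj : (F : Set (Set T)).PairwiseDisjoint id) :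
    ∑ A ∈ F, ENNReal.ofReal (m A) ≤ variationSF m 𝒜 E :=
  le_iSup₂_of_le F ⟨hF, hdisj⟩ le_rfl

theorem ofReal_le_variationSF {C E : Set T} (hC : C ∈ 𝒜) (hCE : C ⊆ E) :
    ENNReal.ofReal (m C) ≤ variationSF m 𝒜 E := by
  simpa using sum_le_variationSF (m := m) (F := {C}) (by simpa using ⟨hC, hCE⟩) (by simp)

theorem variationSF_mono {E E' : Set T} (h : E ⊆ E') :
    variationSF m 𝒜 E ≤ variationSF m 𝒜 E' :=
  iSup₂_le fun _ hF =>
    sum_le_variationSF (fun A hA => ⟨(hF.1 A hA).1, (hF.1 A hA).2.trans h⟩) hF.2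

theorem eq_zero_of_variationSF_eq_zero (hpos : ∀ A ∈ 𝒜, 0 ≤ m A) {B C : Set T}
    (hB : variationSF m 𝒜 B = 0) (hC : C ∈ 𝒜) (hCB : C ⊆ B) : m C = 0 := by
  have h := ofReal_le_variationSF (m := m) hC hCB
  rw [hB, nonpos_iff_eq_zero, ENNReal.ofReal_eq_zero] at h
  exact le_antisymm h (hpos C hC)

theorem NullAddSF.apply_sdiff_eq (hnull : NullAddSF m 𝒜) (halg : MeasureTheory.IsSetAlgebra 𝒜)
    {B C : Set T} (hB : B ∈ 𝒜) (hBnull : ∀ D ∈ 𝒜, D ⊆ B → m D = 0) (hC : C ∈ 𝒜) :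
    m (C \ B) = m C := by
  have hCB : C ∩ B ∈ 𝒜 := halg.inter_mem hC hB
  rw [← hnull _ (halg.sdiff_mem hC hB) _ hCB (hBnull _ hCB inter_subset_right),
    sdiff_union_inter]

/-- Removing `B` from the members of a disjoint family keeps it disjoint and, by
null-additivity, keeps its sum; members swallowed by `B` collapse to `∅`, which costs nothing. -/
theorem variationSF_union_le (halg : MeasureTheory.IsSetAlgebra 𝒜) (h0 : m ∅ = 0)
    (hnull : NullAddSF m 𝒜) {B : Set T} (hB : B ∈ 𝒜) (hBnull : ∀ D ∈ 𝒜, D ⊆ B → m D = 0)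
    (E : Set T) : variationSF m 𝒜 (E ∪ B) ≤ variationSF m 𝒜 E := by
  classical
  refine iSup₂_le fun F ⟨hF, hdisj⟩ => ?_
  have hdisj' : (F : Set (Set T)).PairwiseDisjoint (· \ B) := hdisj.mono fun _ => sdiff_subset
  calc ∑ C ∈ F, ENNReal.ofReal (m C)
      = ∑ C ∈ F, ENNReal.ofReal (m (C \ B)) :=
        Finset.sum_congr rfl fun C hC => by rw [hnull.apply_sdiff_eq halg hB hBnull (hF C hC).1]
    _ = ∑ D ∈ F.image (· \ B), ENNReal.ofReal (m D) :=
        (Finset.sum_image_of_disjoint (g := fun D => ENNReal.ofReal (m D)) (by simp [h0])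
          hdisj').symm
    _ ≤ variationSF m 𝒜 E := by
        refine sum_le_variationSF ?_ ?_
        · simp only [Finset.mem_image]
          rintro _ ⟨C, hC, rfl⟩
          exact ⟨halg.sdiff_mem (hF C hC).1 hB,
            sdiff_subset_iff.2 ((hF C hC).2.trans (union_comm E B).subset)⟩
        · rw [Finset.coe_image]
          exact hdisj.image_of_le fun _ => sdiff_subset

end Variation

/-- If `m` is null-additive, then its variation is null-additive on `𝒜`. -/
theorem variation_nullAdditive_of_nullAdditive (𝒜 : Set (Set T)) (m : Set T → ℝ)
    (halg : IsSetAlgebra' 𝒜) (h0 : m ∅ = 0) (hpos : ∀ A ∈ 𝒜, 0 ≤ m A)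
    (hnull : NullAddSF m 𝒜) :
    ∀ A ∈ 𝒜, ∀ B ∈ 𝒜, variationSF m 𝒜 B = 0 →
      variationSF m 𝒜 (A ∪ B) = variationSF m 𝒜 A := by
  intro A _ B hB hvB
  have hBnull : ∀ D ∈ 𝒜, D ⊆ B → m D = 0 := fun D hD hDB =>
    eq_zero_of_variationSF_eq_zero hpos hvB hD hDB
  exact le_antisymm (variationSF_union_le halg.isSetAlgebra h0 hnull hB hBnull A)
    (variationSF_mono subset_union_left)
end

section
/- If m is monotone and null-additive and A ∈ A is an atom of m, then for every finite partition {B₁,...,Bₙ} of A into sets of A, there exists exactly one index i₀ such that m(B_{i₀}) = m(A), and m(Bᵢ) = 0 for all i ≠ i₀. -/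
open Set ENNReal

variable {T : Type*}

/-- A partition of `A` into nonvoid pairwise disjoint members of `𝒜`. -/
def IsPartitionOf (𝒜 : Set (Set T)) (A : Set T) (P : Finset (Set T)) : Prop :=
  (∀ B ∈ P, B ∈ 𝒜 ∧ B.Nonempty ∧ B ⊆ A) ∧
  (P : Set (Set T)).PairwiseDisjoint id ∧ ⋃₀ (P : Set (Set T)) = A

/-- `Q` is finer than `P`. -/
def RefinesPart (P Q : Finset (Set T)) : Prop := ∀ B ∈ Q, ∃ C ∈ P, B ⊆ C

/-- In any finite partition of an atom of a monotone null-additive `m`, exactly one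
piece has measure `m(A)` and all the others are `m`-null. -/
theorem atom_partition_unique (𝒜 : Set (Set T)) (m : Set T → ℝ)
    (halg : IsSetAlgebra' 𝒜) (h0 : m ∅ = 0) (hpos : ∀ A ∈ 𝒜, 0 ≤ m A)
    (hmono : MonoSF m 𝒜) (hnull : NullAddSF m 𝒜)
    (A : Set T) (hA : IsAtomOf m 𝒜 A)
    (P : Finset (Set T)) (hP : IsPartitionOf 𝒜 A P) :
    ∃ B₀ ∈ P, m B₀ = m A ∧ ∀ C ∈ P, C ≠ B₀ → m C = 0 := by
  classical
  obtain ⟨hemp, hcompl, hunion⟩ := halg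
  obtain ⟨hA𝒜, hApos, hatom⟩ := hA
  obtain ⟨hmem, hdisj, hcover⟩ := hP
  by_cases hall : ∀ B ∈ P, m B = 0
  · exfalso
    have key : ∀ (Q : Finset (Set T)), (∀ B ∈ Q, B ∈ 𝒜 ∧ m B = 0) →
        ⋃₀ (Q : Set (Set T)) ∈ 𝒜 ∧ m (⋃₀ (Q : Set (Set T))) = 0 := by
      intro Q
      induction Q using Finset.induction with
      | empty => simp [hemp, h0]
      | @insert a s hx ih =>
        intro h
        have hs := ih (fun B hB => h B (Finset.mem_insert_of_mem hB))
        have ha := h a (Finset.mem_insert_self _ _)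
        constructor
        · rw [Finset.coe_insert, Set.sUnion_insert]
          exact hunion _ ha.1 _ hs.1
        · rw [Finset.coe_insert, Set.sUnion_insert, Set.union_comm,
            hnull _ hs.1 _ ha.1 ha.2]
          exact hs.2
    have := (key P (fun B hB => ⟨(hmem B hB).1, hall B hB⟩)).2
    rw [hcover] at this
    linarith
  · push_neg at hall
    obtain ⟨B₀, hB₀P, hB₀ne⟩ := hall
    have hB₀ := hmem B₀ hB₀P
    have hdiff : A \ B₀ ∈ 𝒜 := by
      have h1 : A \ B₀ = (Aᶜ ∪ B₀)ᶜ := by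
        ext x; simp [Set.diff_eq]
      rw [h1]; exact hcompl _ (hunion _ (hcompl _ hA𝒜) _ hB₀.1)
    have hnd : m (A \ B₀) = 0 := by
      rcases hatom B₀ hB₀.1 hB₀.2.2 with h | h
      · exact absurd h hB₀ne
      · exact h
    have hmB₀ : m B₀ = m A := by
      have hu : B₀ ∪ (A \ B₀) = A := Set.union_diff_cancel' (le_refl _) hB₀.2.2
      rw [← hu]
      exact (hnull _ hB₀.1 _ hdiff hnd).symm
    refine ⟨B₀, hB₀P, hmB₀, ?_⟩
    intro C hCP hCne
    have hC := hmem C hCP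
    have hsub : C ⊆ A \ B₀ := by
      have hd : Disjoint C B₀ :=
        hdisj (Finset.mem_coe.mpr hCP) (Finset.mem_coe.mpr hB₀P) hCne
      intro x hx
      exact ⟨hC.2.2 hx, fun hxB => hd.le_bot ⟨hx, hxB⟩⟩
    have h1 := hmono C hC.1 _ hdiff hsub
    have h2 := hpos C hC.1
    linarith
end

section
/- If m is a finitely purely atomic, subadditive, monotone measure, then m is of finite variation: m̄(T) < ∞. In fact m̄(T) = Σᵢ m(Aᵢ) where A₁,...,Aₚ are the disjoint atoms covering T. -/
open Set ENNReal

variable {T : Type*}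

lemma biUnion_subadd_aux {ι : Type*} (𝒜 : Set (Set T)) (m : Set T → ℝ)
    (hempty : ∅ ∈ 𝒜) (h0 : m ∅ = 0)
    (hunion : ∀ A ∈ 𝒜, ∀ B ∈ 𝒜, A ∪ B ∈ 𝒜)
    (hsub : SubaddSF m 𝒜) (G : Finset ι) (f : ι → Set T)
    (hf : ∀ i ∈ G, f i ∈ 𝒜) :
    (⋃ i ∈ G, f i) ∈ 𝒜 ∧ m (⋃ i ∈ G, f i) ≤ ∑ i ∈ G, m (f i) := by
  classical
  induction G using Finset.induction_on with
  | empty => simpa [h0] using hempty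
  | @insert j G hj ih =>
    have hjm : f j ∈ 𝒜 := hf j (Finset.mem_insert_self _ _)
    obtain ⟨hU, hle⟩ := ih (fun i hi => hf i (Finset.mem_insert_of_mem hi))
    have heq : (⋃ i ∈ (insert j G : Finset ι), f i) = f j ∪ ⋃ i ∈ G, f i := by
      simp
    constructor
    · rw [heq]; exact hunion _ hjm _ hU
    · rw [heq, Finset.sum_insert hj]
      calc m (f j ∪ ⋃ i ∈ G, f i) ≤ m (f j) + m (⋃ i ∈ G, f i) := hsub _ hjm _ hU
        _ ≤ m (f j) + ∑ i ∈ G, m (f i) := by linarith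

/-- A finitely purely atomic subadditive monotone measure is of finite variation,
and `m̄(T) = Σᵢ m(Aᵢ)` over the disjoint atoms covering `T`. -/
theorem finitelyPurelyAtomic_finite_variation (𝒜 : Set (Set T)) (m : Set T → ℝ)
    (halg : IsSetAlgebra' 𝒜) (h0 : m ∅ = 0) (hpos : ∀ A ∈ 𝒜, 0 ≤ m A)
    (hmono : MonoSF m 𝒜) (hsub : SubaddSF m 𝒜)
    (F : Finset (Set T)) (hatoms : ∀ A ∈ F, IsAtomOf m 𝒜 A)
    (hdisj : (F : Set (Set T)).PairwiseDisjoint id)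
    (hcover : ⋃₀ (F : Set (Set T)) = Set.univ) :
    variationSF m 𝒜 Set.univ = ∑ A ∈ F, ENNReal.ofReal (m A) ∧
    variationSF m 𝒜 Set.univ ≠ ⊤ := by
  obtain ⟨hempty, hcompl, hunion⟩ := halg
  have hinter : ∀ A ∈ 𝒜, ∀ B ∈ 𝒜, A ∩ B ∈ 𝒜 := by
    intro A hA B hB
    have h : A ∩ B = (Aᶜ ∪ Bᶜ)ᶜ := by rw [Set.compl_union, compl_compl, compl_compl]
    rw [h]
    exact hcompl _ (hunion _ (hcompl _ hA) _ (hcompl _ hB))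
  -- key: for each atom A, sum over any admissible disjoint family G of m (A ∩ B) ≤ m A
  have key : ∀ A, IsAtomOf m 𝒜 A → ∀ G : Finset (Set T), (∀ B ∈ G, B ∈ 𝒜) →
      (G : Set (Set T)).PairwiseDisjoint id → ∑ B ∈ G, m (A ∩ B) ≤ m A := by
    intro A hA G hG hGd
    obtain ⟨hAm, hApos, hAatom⟩ := hA
    by_cases hz : ∀ B ∈ G, m (A ∩ B) = 0
    · rw [Finset.sum_eq_zero hz]; linarith
    · push_neg at hz
      obtain ⟨B₀, hB₀G, hB₀⟩ := hz
      have hB₀pos : 0 < m (A ∩ B₀) :=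
        lt_of_le_of_ne (hpos _ (hinter _ hAm _ (hG _ hB₀G))) (Ne.symm hB₀)
      have hdiff0 : m (A \ (A ∩ B₀)) = 0 := by
        rcases hAatom (A ∩ B₀) (hinter _ hAm _ (hG _ hB₀G)) Set.inter_subset_left with h | h
        · exact absurd h hB₀
        · exact h
      have hother : ∀ B ∈ G, B ≠ B₀ → m (A ∩ B) = 0 := by
        intro B hBG hne
        have hdisjB : Disjoint B B₀ := hGd hBG hB₀G hne
        have hsubset : A ∩ B ⊆ A \ (A ∩ B₀) := by
          intro x ⟨hxA, hxB⟩
          refine ⟨hxA, fun hx => ?_⟩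
          exact (Set.disjoint_left.mp hdisjB hxB) hx.2
        have hABm : A ∩ B ∈ 𝒜 := hinter _ hAm _ (hG _ hBG)
        have hdm : A \ (A ∩ B₀) ∈ 𝒜 := by
          have h : A \ (A ∩ B₀) = A ∩ (A ∩ B₀)ᶜ := rfl
          rw [h]
          exact hinter _ hAm _ (hcompl _ (hinter _ hAm _ (hG _ hB₀G)))
        have := hmono _ hABm _ hdm hsubset
        have := hpos _ hABm
        linarith
      rw [Finset.sum_eq_single_of_mem B₀ hB₀G (fun B hB hne => hother B hB hne)]
      exact hmono _ (hinter _ hAm _ (hG _ hB₀G)) _ hAm Set.inter_subset_left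
  -- upper bound for any admissible family G
  have upper : ∀ G : Finset (Set T),
      ((∀ A ∈ G, A ∈ 𝒜 ∧ A ⊆ (Set.univ : Set T)) ∧
        (G : Set (Set T)).PairwiseDisjoint id) →
      ∑ B ∈ G, ENNReal.ofReal (m B) ≤ ∑ A ∈ F, ENNReal.ofReal (m A) := by
    intro G ⟨hGmem, hGd⟩
    have hGm : ∀ B ∈ G, B ∈ 𝒜 := fun B hB => (hGmem B hB).1
    have hFm : ∀ A ∈ F, A ∈ 𝒜 := fun A hA => (hatoms A hA).1
    -- real inequality
    have hreal : ∑ B ∈ G, m B ≤ ∑ A ∈ F, m A := by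
      have step1 : ∀ B ∈ G, m B ≤ ∑ A ∈ F, m (A ∩ B) := by
        intro B hB
        have hBm : B ∈ 𝒜 := hGm B hB
        obtain ⟨hHU, hHle⟩ := biUnion_subadd_aux 𝒜 m hempty h0 hunion hsub F
          (fun A => A ∩ B) (fun A hA => hinter _ (hFm A hA) _ hBm)
        have hcovB : B = ⋃ A ∈ F, A ∩ B := by
          ext x
          simp only [Set.mem_iUnion, Set.mem_inter_iff, exists_prop]
          constructor
          · intro hx
            have hx' : x ∈ ⋃₀ (F : Set (Set T)) := by rw [hcover]; trivial
            obtain ⟨A, hA, hxA⟩ := hx'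
            exact ⟨A, hA, hxA, hx⟩
          · rintro ⟨A, hA, hxA, hx⟩
            exact hx
        calc m B = m (⋃ A ∈ F, A ∩ B) := by rw [← hcovB]
          _ ≤ ∑ A ∈ F, m (A ∩ B) := hHle
      calc ∑ B ∈ G, m B ≤ ∑ B ∈ G, ∑ A ∈ F, m (A ∩ B) :=
            Finset.sum_le_sum step1
        _ = ∑ A ∈ F, ∑ B ∈ G, m (A ∩ B) := Finset.sum_comm
        _ ≤ ∑ A ∈ F, m A :=
            Finset.sum_le_sum (fun A hA => key A (hatoms A hA) G hGm hGd)
    calc ∑ B ∈ G, ENNReal.ofReal (m B)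
        = ENNReal.ofReal (∑ B ∈ G, m B) := by
          rw [ENNReal.ofReal_sum_of_nonneg (fun B hB => hpos _ (hGm B hB))]
      _ ≤ ENNReal.ofReal (∑ A ∈ F, m A) := ENNReal.ofReal_le_ofReal hreal
      _ = ∑ A ∈ F, ENNReal.ofReal (m A) := by
          rw [ENNReal.ofReal_sum_of_nonneg (fun A hA => hpos _ (hFm A hA))]
  have hFadm : F ∈ {G : Finset (Set T) |
      (∀ A ∈ G, A ∈ 𝒜 ∧ A ⊆ (Set.univ : Set T)) ∧
      (G : Set (Set T)).PairwiseDisjoint id} :=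
    ⟨fun A hA => ⟨(hatoms A hA).1, Set.subset_univ A⟩, hdisj⟩
  have heq : variationSF m 𝒜 Set.univ = ∑ A ∈ F, ENNReal.ofReal (m A) := by
    apply le_antisymm
    · exact iSup₂_le fun G hG => upper G hG
    · exact le_iSup₂_of_le F hFadm le_rfl
  refine ⟨heq, ?_⟩
  rw [heq]
  exact (ENNReal.sum_lt_top.2 (fun A _ => ENNReal.ofReal_lt_top)).ne
end

section
/- Let T be a locally compact Hausdorff space with Borel σ-algebra B and m : B → [0,∞) a regular, null-additive, monotone measure. If A ∈ B is an atom of m, then there exists a unique point a ∈ A such that m(A) = m({a}) and m(A \ {a}) = 0. -/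
open Set ENNReal

variable {T : Type*}

/-- `m` is regular: each Borel set can be approximated by a compact inside and an
open outside, up to arbitrarily small measure. -/
def RegularSF [TopologicalSpace T] [MeasurableSpace T] (m : Set T → ℝ) : Prop :=
  ∀ A : Set T, MeasurableSet A → ∀ ε > 0, ∃ K D : Set T,
    IsCompact K ∧ IsOpen D ∧ K ⊆ A ∧ A ⊆ D ∧ m (D \ K) < ε

/-- In a locally compact Hausdorff space with a regular null-additive monotone `m`
on the Borel σ-algebra, every atom concentrates at a unique single point. -/
theorem atom_single_point [TopologicalSpace T] [T2Space T] [LocallyCompactSpace T]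
    [MeasurableSpace T] [BorelSpace T] (m : Set T → ℝ)
    (h0 : m ∅ = 0) (hpos : ∀ A : Set T, MeasurableSet A → 0 ≤ m A)
    (hreg : RegularSF m)
    (hnull : NullAddSF m {s : Set T | MeasurableSet s})
    (hmono : MonoSF m {s : Set T | MeasurableSet s})
    (A : Set T) (hA : IsAtomOf m {s : Set T | MeasurableSet s} A) :
    ∃! a : T, a ∈ A ∧ m A = m {a} ∧ m (A \ {a}) = 0 := by
  classical
  obtain ⟨hAmeas, hMA, hatom⟩ := hA
  have hAm : MeasurableSet A := hAmeas
  -- if B ⊆ A measurable and m (A \ B) = 0 then m B = m A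
  have key : ∀ B : Set T, MeasurableSet B → B ⊆ A → m (A \ B) = 0 → m B = m A := by
    intro B hB hBA h
    have h2 := hnull B hB (A \ B) (hAm.diff hB) h
    rw [Set.union_diff_cancel hBA] at h2
    exact h2.symm
  -- shrink any "full" measurable subset to a "full" compact subset
  have shrink : ∀ B : Set T, MeasurableSet B → B ⊆ A → m (A \ B) = 0 →
      ∃ C : Set T, IsCompact C ∧ C ⊆ B ∧ m (A \ C) = 0 := by
    intro B hB hBA hnullB
    have hmB : m B = m A := key B hB hBA hnullB
    obtain ⟨K, D, hKc, hDo, hKB, hBD, hKD⟩ := hreg B hB (m B) (by rw [hmB]; exact hMA)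
    have hKm : MeasurableSet K := hKc.isClosed.measurableSet
    have hKA : K ⊆ A := hKB.trans hBA
    have hBKlt : m (B \ K) < m B :=
      lt_of_le_of_lt (hmono _ (hB.diff hKm) _ (hDo.measurableSet.diff hKm)
        (Set.diff_subset_diff_left hBD)) hKD
    have hAKeq : A \ K = (B \ K) ∪ (A \ B) := by
      ext x
      constructor
      · rintro ⟨hxA, hxK⟩
        by_cases hxB : x ∈ B
        · exact Or.inl ⟨hxB, hxK⟩
        · exact Or.inr ⟨hxA, hxB⟩
      · rintro (⟨hxB, hxK⟩ | ⟨hxA, hxB⟩)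
        · exact ⟨hBA hxB, hxK⟩
        · exact ⟨hxA, fun hk => hxB (hKB hk)⟩
    have hAK : m (A \ K) = m (B \ K) := by
      rw [hAKeq]
      exact hnull _ (hB.diff hKm) _ (hAm.diff hB) hnullB
    rcases hatom K hKm hKA with hK0 | hAK0
    · exfalso
      have h3 := hnull (A \ K) (hAm.diff hKm) K hKm hK0
      rw [Set.diff_union_of_subset hKA] at h3
      rw [hAK] at h3
      linarith
    · exact ⟨K, hKc, hKB, hAK0⟩
  -- the family of full compact subsets of A
  set S : Set (Set T) := {C | IsCompact C ∧ C ⊆ A ∧ m (A \ C) = 0} with hSdef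
  obtain ⟨K0, hK0c, hK0A, hK0null⟩ :=
    shrink A hAm subset_rfl (by rw [Set.diff_self]; exact h0)
  have hK0S : K0 ∈ S := ⟨hK0c, hK0A, hK0null⟩
  have hSne : Nonempty S := ⟨⟨K0, hK0S⟩⟩
  have hdir : DirectedOn (· ⊇ ·) S := by
    rintro C1 ⟨h1c, h1A, h1n⟩ C2 ⟨h2c, h2A, h2n⟩
    refine ⟨C1 ∩ C2, ⟨h1c.inter_right h2c.isClosed,
      Set.inter_subset_left.trans h1A, ?_⟩, Set.inter_subset_left, Set.inter_subset_right⟩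
    have heq : A \ (C1 ∩ C2) = (A \ C1) ∪ (A \ C2) := Set.diff_inter
    rw [heq,
      hnull _ (hAm.diff h1c.isClosed.measurableSet) _ (hAm.diff h2c.isClosed.measurableSet) h2n]
    exact h1n
  have hnonempty : ∀ C ∈ S, C.Nonempty := by
    rintro C ⟨hc, hCA, hCn⟩
    rcases Set.eq_empty_or_nonempty C with rfl | h
    · exfalso
      have := key ∅ MeasurableSet.empty (Set.empty_subset A) hCn
      rw [h0] at this
      linarith
    · exact h
  obtain ⟨a, haS⟩ := IsCompact.nonempty_sInter_of_directed_nonempty_isCompact_isClosed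
    hdir hnonempty (fun C hC => hC.1) (fun C hC => hC.1.isClosed)
  have haA : a ∈ A := hK0A (haS K0 hK0S)
  have hsingm : MeasurableSet ({a} : Set T) := measurableSet_singleton a
  -- main claim: m (A \ {a}) = 0
  have hmain : m (A \ {a}) = 0 := by
    by_contra hne
    have ha0 : m ({a} : Set T) = 0 := by
      rcases hatom {a} hsingm (Set.singleton_subset_iff.2 haA) with h | h
      · exact h
      · exact absurd h hne
    have hdiffeq : A \ (A \ {a}) = {a} := by
      rw [Set.diff_diff_cancel_left (Set.singleton_subset_iff.2 haA)]
    obtain ⟨C, hCc, hCsub, hCn⟩ := shrink (A \ {a}) (hAm.diff hsingm) Set.diff_subset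
      (by rw [hdiffeq]; exact ha0)
    have : a ∈ C := haS C ⟨hCc, hCsub.trans Set.diff_subset, hCn⟩
    exact (hCsub this).2 rfl
  have hmeq : m A = m ({a} : Set T) :=
    (key {a} hsingm (Set.singleton_subset_iff.2 haA) hmain).symm
  refine ⟨a, ⟨haA, hmeq, hmain⟩, ?_⟩
  rintro b ⟨hbA, hbeq, hbnull⟩
  by_contra hba
  have hsub : ({b} : Set T) ⊆ A \ {a} :=
    Set.singleton_subset_iff.2 ⟨hbA, fun h => hba h⟩
  have hle : m ({b} : Set T) ≤ m (A \ {a}) :=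
    hmono _ (measurableSet_singleton b) _ (hAm.diff hsingm) hsub
  rw [hmain] at hle
  linarith [hbeq ▸ hMA]
end

section
/- Let T be locally compact Hausdorff with Borel σ-algebra B, m : B → [0,∞) regular, null-additive, monotone, and finitely purely atomic with atoms A₁,...,Aₙ partitioning T. Then there exist points aᵢ ∈ Aᵢ such that m(T \ {a₁,...,aₙ}) = 0 and m(T) = m({a₁,...,aₙ}). -/
open Set ENNReal

variable {T : Type*}

lemma null_union_null (m : Set T → ℝ) [MeasurableSpace T]
    (hnull : NullAddSF m {s : Set T | MeasurableSet s})
    {X Y : Set T} (hX : MeasurableSet X) (hY : MeasurableSet Y)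
    (hX0 : m X = 0) (hY0 : m Y = 0) : m (X ∪ Y) = 0 := by
  rw [hnull X hX Y hY hY0]; exact hX0

lemma atom_point [TopologicalSpace T] [T2Space T] [MeasurableSpace T] [BorelSpace T]
    (m : Set T → ℝ) (h0 : m ∅ = 0) (hpos : ∀ A : Set T, MeasurableSet A → 0 ≤ m A)
    (hreg : RegularSF m)
    (hnull : NullAddSF m {s : Set T | MeasurableSet s})
    (hmono : MonoSF m {s : Set T | MeasurableSet s})
    (A : Set T) (hA : IsAtomOf m {s : Set T | MeasurableSet s} A) :
    ∃ a ∈ A, m (A \ {a}) = 0 := by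
  obtain ⟨hAm, hApos, hatom⟩ := hA
  have hAm' : MeasurableSet A := hAm
  set 𝒦 : Set (Set T) := {K | IsCompact K ∧ K ⊆ A ∧ m (A \ K) = 0} with h𝒦
  have hKmeas : ∀ K ∈ 𝒦, MeasurableSet K := fun K hK => hK.1.isClosed.measurableSet
  -- every member of 𝒦 is nonempty
  have hKne : ∀ K ∈ 𝒦, K.Nonempty := by
    intro K hK
    rcases K.eq_empty_or_nonempty with h | h
    · exfalso
      have := hK.2.2
      rw [h, Set.diff_empty] at this
      exact absurd this (ne_of_gt hApos)
    · exact h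
  -- 𝒦 is closed under intersections
  have hKinter : ∀ K1 ∈ 𝒦, ∀ K2 ∈ 𝒦, K1 ∩ K2 ∈ 𝒦 := by
    intro K1 h1 K2 h2
    refine ⟨h1.1.inter h2.1, (Set.inter_subset_left).trans h1.2.1, ?_⟩
    rw [Set.diff_inter]
    exact null_union_null m hnull (hAm'.diff (hKmeas _ h1)) (hAm'.diff (hKmeas _ h2))
      h1.2.2 h2.2.2
  -- 𝒦 is nonempty
  obtain ⟨K0, hK0⟩ : ∃ K0, K0 ∈ 𝒦 := by
    obtain ⟨K, D, hKc, hDo, hKA, hAD, hm⟩ := hreg A hAm' (m A) hApos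
    have hKm : MeasurableSet K := hKc.isClosed.measurableSet
    have hAK : m (A \ K) < m A := by
      refine lt_of_le_of_lt ?_ hm
      exact hmono _ (hAm'.diff hKm) _ (hDo.measurableSet.diff hKm)
        (Set.diff_subset_diff_left hAD)
    rcases hatom K hKm hKA with h | h
    · exfalso
      have : m A = m (A \ K) := by
        have := hnull (A \ K) (hAm'.diff hKm) K hKm h
        rwa [Set.diff_union_of_subset hKA] at this
      rw [this] at hAK
      exact lt_irrefl _ hAK
    · exact ⟨K, hKc, hKA, h⟩
  -- the intersection of 𝒦 is nonempty
  obtain ⟨a, haK0, ha⟩ : ∃ a, a ∈ K0 ∧ ∀ K ∈ 𝒦, a ∈ K := by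
    by_contra hcon
    push_neg at hcon
    have hempty : K0 ∩ ⋂ K : 𝒦, (K : Set T) = ∅ := by
      ext x
      simp only [Set.mem_inter_iff, Set.mem_iInter, Set.mem_empty_iff_false, iff_false,
        not_and, not_forall]
      intro hx
      obtain ⟨K, hK, hxK⟩ := hcon x hx
      exact ⟨⟨K, hK⟩, hxK⟩
    obtain ⟨t, ht⟩ := hK0.1.elim_finite_subfamily_closed (fun K : 𝒦 => (K : Set T))
      (fun K => K.2.1.isClosed) hempty
    have hmem : ∀ u : Finset ↥𝒦, K0 ∩ ⋂ K ∈ u, (K : Set T) ∈ 𝒦 := by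
      classical
      intro u
      induction u using Finset.induction_on with
      | empty => simpa using hK0
      | @insert K s _ ih =>
        rw [Finset.set_biInter_insert, ← Set.inter_assoc, Set.inter_comm K0 (K : Set T),
          Set.inter_assoc]
        exact hKinter _ K.2 _ ih
    have := hmem t
    rw [ht] at this
    exact absurd rfl (Set.nonempty_iff_ne_empty.mp (hKne _ this))
  refine ⟨a, hK0.2.1 haK0, ?_⟩
  -- show m (A \ {a}) = 0
  have hsm : MeasurableSet (A \ {a}) := hAm'.diff (measurableSet_singleton a)
  have hlt : ∀ ε > 0, m (A \ {a}) < ε := by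
    intro ε hε
    obtain ⟨K, D, hKc, hDo, hKA, hAD, hm⟩ := hreg (A \ {a}) hsm ε hε
    have hKm : MeasurableSet K := hKc.isClosed.measurableSet
    rcases hatom K hKm (hKA.trans Set.diff_subset) with h | h
    · calc m (A \ {a}) = m ((A \ {a}) \ K ∪ K) := by
            rw [Set.diff_union_of_subset hKA]
        _ = m ((A \ {a}) \ K) := hnull _ (hsm.diff hKm) _ hKm h
        _ ≤ m (D \ K) := hmono _ (hsm.diff hKm) _ (hDo.measurableSet.diff hKm)
            (Set.diff_subset_diff_left hAD)
        _ < ε := hm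
    · exfalso
      have hKmem : K ∈ 𝒦 := ⟨hKc, hKA.trans Set.diff_subset, h⟩
      have : a ∈ K := ha K hKmem
      exact (hKA this).2 rfl
  have hge : 0 ≤ m (A \ {a}) := hpos _ hsm
  by_contra hne
  have : 0 < m (A \ {a}) := lt_of_le_of_ne hge (Ne.symm hne)
  exact lt_irrefl _ (hlt _ this)

lemma null_iUnion_fin [MeasurableSpace T] (m : Set T → ℝ)
    (h0 : m ∅ = 0) (hnull : NullAddSF m {s : Set T | MeasurableSet s})
    {n : ℕ} (N : Fin n → Set T) (hm : ∀ i, MeasurableSet (N i))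
    (hN : ∀ i, m (N i) = 0) : m (⋃ i, N i) = 0 := by
  classical
  have key : ∀ s : Finset (Fin n), m (⋃ i ∈ s, N i) = 0 := by
    intro s
    induction s using Finset.induction_on with
    | empty => simpa using h0
    | @insert j s _ ih =>
      rw [Finset.set_biUnion_insert, Set.union_comm]
      have hbm : MeasurableSet (⋃ i ∈ s, N i) :=
        MeasurableSet.biUnion s.countable_toSet (fun i _ => hm i)
      rw [hnull _ hbm _ (hm j) (hN j)]
      exact ih
  have := key Finset.univ
  simpa using this

/-- For a finitely purely atomic regular null-additive monotone `m` with atoms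
`A₁,...,Aₙ` partitioning `T`, there are points `aᵢ ∈ Aᵢ` with
`m(T \ {a₁,...,aₙ}) = 0` and `m(T) = m({a₁,...,aₙ})`. -/
theorem finitelyPurelyAtomic_points [TopologicalSpace T] [T2Space T]
    [LocallyCompactSpace T] [MeasurableSpace T] [BorelSpace T] (m : Set T → ℝ)
    (h0 : m ∅ = 0) (hpos : ∀ A : Set T, MeasurableSet A → 0 ≤ m A)
    (hreg : RegularSF m)
    (hnull : NullAddSF m {s : Set T | MeasurableSet s})
    (hmono : MonoSF m {s : Set T | MeasurableSet s})
    (n : ℕ) (A : Fin n → Set T)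
    (hatoms : ∀ i, IsAtomOf m {s : Set T | MeasurableSet s} (A i))
    (hdisj : Pairwise (Function.onFun Disjoint A))
    (hcover : ⋃ i, A i = Set.univ) :
    ∃ a : Fin n → T, (∀ i, a i ∈ A i) ∧
      m (Set.univ \ Set.range a) = 0 ∧ m Set.univ = m (Set.range a) := by
  have hpts : ∀ i, ∃ x ∈ A i, m (A i \ {x}) = 0 := fun i =>
    atom_point m h0 hpos hreg hnull hmono (A i) (hatoms i)
  choose a ha hnil using hpts
  have hrm : MeasurableSet (Set.range a) := (Set.finite_range a).measurableSet
  have hAim : ∀ i, MeasurableSet (A i) := fun i => (hatoms i).1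
  have hnull0 : m (Set.univ \ Set.range a) = 0 := by
    have hcov : Set.univ \ Set.range a = ⋃ i, (A i \ Set.range a) := by
      rw [← hcover, Set.iUnion_diff]
    rw [hcov]
    refine null_iUnion_fin m h0 hnull _ (fun i => (hAim i).diff hrm) (fun i => ?_)
    have hsub : A i \ Set.range a ⊆ A i \ {a i} := by
      apply Set.diff_subset_diff_right
      simp [Set.singleton_subset_iff]
    have hle : m (A i \ Set.range a) ≤ m (A i \ {a i}) :=
      hmono _ ((hAim i).diff hrm) _ ((hAim i).diff (measurableSet_singleton _)) hsub
    have hge : 0 ≤ m (A i \ Set.range a) := hpos _ ((hAim i).diff hrm)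
    linarith [hnil i]
  refine ⟨a, ha, hnull0, ?_⟩
  have huniv : Set.range a ∪ (Set.univ \ Set.range a) = Set.univ :=
    Set.union_diff_cancel (Set.subset_univ _)
  calc m Set.univ = m (Set.range a ∪ (Set.univ \ Set.range a)) := by rw [huniv]
    _ = m (Set.range a) := hnull _ hrm _ (MeasurableSet.univ.diff hrm) hnull0
end

section
/- Let T be locally compact Hausdorff, m : B → [0,∞) regular, null-additive, monotone, and A ∈ B an atom of m. Then every function f : T → X (X a Banach space) is m-totally-measurable on A. -/
open Set ENNReal

variable {T : Type*}

/-- `f` is `m`-totally-measurable on `B`. -/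
def TotallyMeasurableOn {X : Type*} [NormedAddCommGroup X] (m : Set T → ℝ)
    (𝒜 : Set (Set T)) (f : T → X) (B : Set T) : Prop :=
  ∀ ε > 0, ∃ A₀ : Set T, ∃ F : Finset (Set T),
    A₀ ∈ 𝒜 ∧ A₀ ⊆ B ∧ (∀ C ∈ F, C ∈ 𝒜 ∧ C.Nonempty ∧ C ⊆ B) ∧
    (insert A₀ (F : Set (Set T))).PairwiseDisjoint id ∧
    A₀ ∪ ⋃₀ (F : Set (Set T)) = B ∧
    variationSF m 𝒜 A₀ < ENNReal.ofReal ε ∧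
    ∀ C ∈ F, ∀ t ∈ C, ∀ s ∈ C, ‖f t - f s‖ < ε

/-- Every vector function is totally measurable on an atom of a regular
null-additive monotone Borel measure. -/
theorem totallyMeasurable_on_atom [TopologicalSpace T] [T2Space T]
    [LocallyCompactSpace T] [MeasurableSpace T] [BorelSpace T]
    {X : Type*} [NormedAddCommGroup X] [NormedSpace ℝ X] [CompleteSpace X]
    (m : Set T → ℝ)
    (h0 : m ∅ = 0) (hpos : ∀ A : Set T, MeasurableSet A → 0 ≤ m A)
    (hreg : RegularSF m)
    (hnull : NullAddSF m {s : Set T | MeasurableSet s})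
    (hmono : MonoSF m {s : Set T | MeasurableSet s})
    (A : Set T) (hA : IsAtomOf m {s : Set T | MeasurableSet s} A)
    (f : T → X) :
    TotallyMeasurableOn m {s : Set T | MeasurableSet s} f A := by
  classical
  obtain ⟨hAmeas, hApos, hAatom⟩ := hA
  simp only [Set.mem_setOf_eq] at hAmeas
  -- basic helpers
  have hnullsub : ∀ B C : Set T, MeasurableSet B → MeasurableSet C → B ⊆ C →
      m C = 0 → m B = 0 := by
    intro B C hB hC hsub h
    have h1 := hmono B hB C hC hsub
    have h2 := hpos B hB
    linarith
  have hunion0 : ∀ B C : Set T, MeasurableSet B → MeasurableSet C →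
      m B = 0 → m C = 0 → m (B ∪ C) = 0 := by
    intro B C hB hC h1 h2
    rw [hnull B hB C hC h2]; exact h1
  -- Step 1: a compact K ⊆ A with m (A \ K) = 0
  obtain ⟨K, D, hKcomp, hDopen, hKA, hAD, hmKD⟩ := hreg A hAmeas (m A) hApos
  have hKmeas : MeasurableSet K := hKcomp.isClosed.measurableSet
  have hDmeas : MeasurableSet D := hDopen.measurableSet
  have hAKle : m (A \ K) ≤ m (D \ K) :=
    hmono _ (hAmeas.diff hKmeas) _ (hDmeas.diff hKmeas) (fun x hx => ⟨hAD hx.1, hx.2⟩)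
  have hAK0 : m (A \ K) = 0 := by
    rcases hAatom K hKmeas hKA with h | h
    · exfalso
      have : m A = m (A \ K) := by
        have := hnull (A \ K) (hAmeas.diff hKmeas) K hKmeas h
        rwa [Set.diff_union_of_subset hKA] at this
      linarith
    · exact h
  -- Step 2: a concentration point t₀ ∈ K
  have hKt : ∃ t₀ ∈ K, ∀ U : Set T, IsOpen U → t₀ ∈ U → m (K \ U) = 0 := by
    by_contra hcon
    push_neg at hcon
    -- choose open sets
    have hU : ∀ t : T, ∃ U : Set T, IsOpen U ∧ t ∈ U ∧ (t ∈ K → m (K \ U) ≠ 0) := by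
      intro t
      by_cases ht : t ∈ K
      · obtain ⟨U, hUo, htU, hUm⟩ := hcon t ht
        exact ⟨U, hUo, htU, fun _ => hUm⟩
      · exact ⟨Set.univ, isOpen_univ, Set.mem_univ t, fun h => absurd h ht⟩
    choose U hUo hUmem hUne using hU
    have hinter0 : ∀ t ∈ K, m (K ∩ U t) = 0 := by
      intro t ht
      rcases hAatom (K ∩ U t) (hKmeas.inter (hUo t).measurableSet)
          (fun x hx => hKA hx.1) with h | h
      · exact h
      · exfalso
        apply hUne t ht
        exact hnullsub _ _ (hKmeas.diff (hUo t).measurableSet)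
          (hAmeas.diff (hKmeas.inter (hUo t).measurableSet))
          (fun x hx => ⟨hKA hx.1, fun hx' => hx.2 hx'.2⟩) h
    obtain ⟨F, hFK, hFcov⟩ := hKcomp.elim_nhds_subcover U
      (fun t ht => (hUo t).mem_nhds (hUmem t))
    -- m K = 0
    have hbU : ∀ G : Finset T, (∀ x ∈ G, x ∈ K) → m (⋃ x ∈ G, K ∩ U x) = 0 := by
      intro G
      induction G using Finset.induction_on with
      | empty => intro _; simpa using h0
      | @insert a s ha ih =>
        intro hmem
        rw [Finset.set_biUnion_insert]
        refine hunion0 _ _ (hKmeas.inter (hUo a).measurableSet) ?_ ?_ ?_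
        · exact (Finset.measurableSet_biUnion s
            (fun x _ => hKmeas.inter (hUo x).measurableSet))
        · exact hinter0 a (hmem a (Finset.mem_insert_self a s))
        · exact ih (fun x hx => hmem x (Finset.mem_insert_of_mem hx))
    have hK0 : m K = 0 := by
      refine hnullsub K _ hKmeas
        (Finset.measurableSet_biUnion F (fun x _ => hKmeas.inter (hUo x).measurableSet))
        ?_ (hbU F hFK)
      intro x hx
      obtain ⟨t, htF, htU⟩ := Set.mem_iUnion₂.mp (hFcov hx)
      exact Set.mem_iUnion₂.mpr ⟨t, htF, hx, htU⟩
    have : m A = 0 := by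
      have := hnull K hKmeas (A \ K) (hAmeas.diff hKmeas) hAK0
      rw [Set.union_diff_cancel hKA] at this
      rw [this, hK0]
    linarith
  obtain ⟨t₀, ht₀K, ht₀⟩ := hKt
  have ht₀A : t₀ ∈ A := hKA ht₀K
  -- Step 3: every measurable subset of A \ {t₀} is null
  have hnull_wo : ∀ B : Set T, MeasurableSet B → B ⊆ A \ {t₀} → m B = 0 := by
    intro B hB hBsub
    by_contra hBne
    have hBpos : 0 < m B := lt_of_le_of_ne (hpos B hB) (Ne.symm hBne)
    have hBA : B ⊆ A := fun x hx => (hBsub hx).1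
    obtain ⟨K', D', hK'comp, hD'open, hK'B, hBD', hmK'D'⟩ := hreg B hB (m B) hBpos
    have hK'meas : MeasurableSet K' := hK'comp.isClosed.measurableSet
    have hK'0 : m K' = 0 := by
      -- K' ⊆ B ⊆ A \ {t₀}; use the concentration point with U = K'ᶜ
      have hKU : m (K \ K'ᶜ) = 0 := by
        refine ht₀ K'ᶜ hK'comp.isClosed.isOpen_compl ?_
        intro h
        exact (hBsub (hK'B h)).2 rfl
      have hKK' : m (K ∩ K') = 0 := by rwa [Set.diff_compl] at hKU
      have hK'K : m (K' \ K) = 0 :=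
        hnullsub _ _ (hK'meas.diff hKmeas) (hAmeas.diff hKmeas)
          (fun x hx => ⟨hBA (hK'B hx.1), hx.2⟩) hAK0
      have h2 : m ((K ∩ K') ∪ (K' \ K)) = 0 :=
        hunion0 _ _ (hKmeas.inter hK'meas) (hK'meas.diff hKmeas) hKK' hK'K
      have heq : (K ∩ K') ∪ (K' \ K) = K' := by
        ext x
        constructor
        · rintro (⟨_, h⟩ | ⟨h, _⟩) <;> exact h
        · intro h
          by_cases hk : x ∈ K
          · exact Or.inl ⟨hk, h⟩
          · exact Or.inr ⟨h, hk⟩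
      rwa [heq] at h2
    -- dichotomy on K'
    rcases hAatom K' hK'meas (fun x hx => hBA (hK'B hx)) with h | h
    · -- then m B < m B
      have h1 : m B = m (B \ K') := by
        have := hnull (B \ K') (hB.diff hK'meas) K' hK'meas h
        rwa [Set.diff_union_of_subset hK'B] at this
      have h2 : m (B \ K') ≤ m (D' \ K') :=
        hmono _ (hB.diff hK'meas) _ (hD'open.measurableSet.diff hK'meas)
          (fun x hx => ⟨hBD' hx.1, hx.2⟩)
      linarith
    · -- m (A \ K') = 0 and m K' = 0 gives m A = 0
      have : m A = 0 := by
        have h1 := hnull K' hK'meas (A \ K') (hAmeas.diff hK'meas) h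
        rw [Set.union_diff_cancel (fun x hx => hBA (hK'B hx))] at h1
        rw [h1, hK'0]
      linarith
  -- Step 4: assemble
  intro ε hε
  refine ⟨A \ {t₀}, {{t₀}}, ?_, Set.diff_subset, ?_, ?_, ?_, ?_, ?_⟩
  · exact (hAmeas.diff (isClosed_singleton.measurableSet))
  · intro C hC
    rw [Finset.mem_singleton] at hC
    subst hC
    exact ⟨isClosed_singleton.measurableSet, Set.singleton_nonempty t₀,
      Set.singleton_subset_iff.mpr ht₀A⟩
  · rw [Finset.coe_singleton]
    intro x hx y hy hxy
    simp only [Set.mem_insert_iff, Set.mem_singleton_iff] at hx hy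
    have hdisj : Disjoint (A \ {t₀}) ({t₀} : Set T) := by
      rw [Set.disjoint_right]
      intro a ha
      rw [Set.mem_singleton_iff] at ha
      subst ha
      exact fun h => h.2 rfl
    rcases hx with rfl | rfl <;> rcases hy with rfl | rfl
    · exact absurd rfl hxy
    · exact hdisj
    · exact hdisj.symm
    · exact absurd rfl hxy
  · rw [Finset.coe_singleton, Set.sUnion_singleton,
      Set.diff_union_of_subset (Set.singleton_subset_iff.mpr ht₀A)]
  · refine lt_of_le_of_lt ?_ (ENNReal.ofReal_pos.mpr hε : (0:ℝ≥0∞) < ENNReal.ofReal ε)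
    refine iSup₂_le ?_
    intro G hG
    have : ∀ C ∈ G, ENNReal.ofReal (m C) = 0 := by
      intro C hC
      have := hG.1 C hC
      rw [hnull_wo C this.1 this.2]
      simp
    rw [Finset.sum_congr rfl this]
    simp
  · intro C hC t ht s hs
    rw [Finset.mem_singleton] at hC
    subst hC
    rw [Set.mem_singleton_iff] at ht hs
    subst ht; subst hs
    simpa using hε
end

section
/- Let T be locally compact Hausdorff, m : B → [0,∞) regular, null-additive, monotone, and A ∈ B an atom of m with unique point a ∈ A satisfying m(A \ {a}) = 0. Then every function f : T → X is Gould m-integrable on A and ∫_A f dm = f(a)·m(A). -/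
open Set ENNReal

variable {T : Type*}

variable {X : Type*} [NormedAddCommGroup X] [NormedSpace ℝ X]

/-- `f` has Gould integral `α` on `A` w.r.t. `m`: the net of Riemann sums
`σ(P) = Σ_{B ∈ P} m(B) • f(t_B)` over tagged partitions of `A`, ordered by
refinement, converges to `α`. -/
def HasGouldIntegralOn (m : Set T → ℝ) (𝒜 : Set (Set T)) (f : T → X) (A : Set T)
    (α : X) : Prop :=
  ∀ ε > 0, ∃ P₀, IsPartitionOf 𝒜 A P₀ ∧ ∀ P, IsPartitionOf 𝒜 A P → RefinesPart P₀ P →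
    ∀ τ : Set T → T, (∀ B ∈ P, τ B ∈ B) →
      ‖(∑ B ∈ P, m B • f (τ B)) - α‖ < ε

/-- `f` is Gould `m`-integrable on `A`. -/
def GouldIntegrableOn (m : Set T → ℝ) (𝒜 : Set (Set T)) (f : T → X) (A : Set T) : Prop :=
  ∃ α, HasGouldIntegralOn m 𝒜 f A α

/-- On an atom `A` with its unique point `a` (with `m(A \ {a}) = 0`), every
function is Gould integrable with `∫_A f dm = f(a)·m(A)`. -/
theorem gould_integral_on_atom [TopologicalSpace T] [T2Space T]
    [LocallyCompactSpace T] [MeasurableSpace T] [BorelSpace T]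
    [CompleteSpace X] (m : Set T → ℝ)
    (h0 : m ∅ = 0) (hpos : ∀ A : Set T, MeasurableSet A → 0 ≤ m A)
    (hreg : RegularSF m)
    (hnull : NullAddSF m {s : Set T | MeasurableSet s})
    (hmono : MonoSF m {s : Set T | MeasurableSet s})
    (A : Set T) (hA : IsAtomOf m {s : Set T | MeasurableSet s} A)
    (a : T) (ha : a ∈ A) (ha0 : m (A \ {a}) = 0)
    (f : T → X) :
    HasGouldIntegralOn m {s : Set T | MeasurableSet s} f A (m A • f a) := by
  classical
  have hAm : MeasurableSet A := hA.1
  have hsm : MeasurableSet ({a} : Set T) := measurableSet_singleton a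
  have hdm : MeasurableSet (A \ {a}) := hAm.diff hsm
  have hmA : m ({a} : Set T) = m A := by
    have h := hnull {a} hsm (A \ {a}) hdm ha0
    rw [Set.union_diff_cancel (by simpa using ha)] at h
    exact h.symm
  intro ε hε
  set P₀ : Finset (Set T) :=
    if A \ {a} = ∅ then {({a} : Set T)} else {({a} : Set T), A \ {a}} with hP₀def
  have hsubcases : ∀ C ∈ P₀, C = ({a} : Set T) ∨ C = A \ {a} := by
    intro C hC
    by_cases h : A \ {a} = ∅ <;> simp [hP₀def, h] at hC <;> tauto
  refine ⟨P₀, ?_, ?_⟩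
  · constructor
    · intro B hB
      rcases hsubcases B hB with rfl | rfl
      · exact ⟨hsm, ⟨a, rfl⟩, by simpa using ha⟩
      · refine ⟨hdm, ?_, Set.diff_subset⟩
        by_contra hne
        rw [Set.not_nonempty_iff_eq_empty] at hne
        rw [hP₀def, if_pos hne, Finset.mem_singleton] at hB
        rw [hne] at hB
        exact Set.singleton_ne_empty a hB.symm
    · constructor
      · intro B hB C hC hne
        rcases hsubcases B hB with rfl | rfl <;> rcases hsubcases C hC with rfl | rfl
        · exact absurd rfl hne
        · exact (Set.disjoint_sdiff_right : Disjoint ({a} : Set T) (A \ {a}))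
        · exact (Set.disjoint_sdiff_right : Disjoint ({a} : Set T) (A \ {a})).symm
        · exact absurd rfl hne
      · by_cases h : A \ {a} = ∅
        · have hAeq : A = {a} := by
            apply Set.Subset.antisymm
            · intro x hx
              by_contra hx'
              exact (Set.eq_empty_iff_forall_notMem.1 h x) ⟨hx, hx'⟩
            · simpa using ha
          simp [hP₀def, h, hAeq]
        · simp only [hP₀def, if_neg h]
          rw [show (({({a} : Set T), A \ {a}} : Finset (Set T)) : Set (Set T))
              = {({a} : Set T), A \ {a}} by simp]
          rw [Set.sUnion_pair]
          exact Set.union_diff_cancel (by simpa using ha)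
  · intro P hP href τ hτ
    have hdico : ∀ B ∈ P, B = ({a} : Set T) ∨ m B = 0 := by
      intro B hB
      obtain ⟨C, hC, hBC⟩ := href B hB
      rcases hsubcases C hC with rfl | rfl
      · left
        rcases (hP.1 B hB).2.1 with ⟨x, hx⟩
        have hxa : x = a := hBC hx
        exact Set.Subset.antisymm hBC (Set.singleton_subset_iff.2 (hxa ▸ hx))
      · right
        have hBm : MeasurableSet B := (hP.1 B hB).1
        exact le_antisymm (ha0 ▸ hmono B hBm (A \ {a}) hdm hBC) (hpos B hBm)
    have haP : ({a} : Set T) ∈ P := by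
      have : a ∈ ⋃₀ (P : Set (Set T)) := hP.2.2.symm ▸ ha
      obtain ⟨B, hB, haB⟩ := this
      rcases hdico B hB with rfl | hB0
      · exact hB
      · -- B has a ∈ B and m B = 0; but also B ⊆ {a} or B ⊆ A\{a}
        obtain ⟨C, hC, hBC⟩ := href B hB
        rcases hsubcases C hC with rfl | rfl
        · have hBe : B = ({a} : Set T) :=
            Set.Subset.antisymm hBC (Set.singleton_subset_iff.2 haB)
          exact hBe ▸ hB
        · exact absurd (hBC haB) (by simp)
    have hsum : ∑ B ∈ P, m B • f (τ B) = m ({a} : Set T) • f (τ ({a} : Set T)) := by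
      apply Finset.sum_eq_single_of_mem _ haP
      intro B hB hne
      rcases hdico B hB with rfl | hB0
      · exact absurd rfl hne
      · simp [hB0]
    have hτa : τ ({a} : Set T) = a := by
      have := hτ _ haP; simpa using this
    rw [hsum, hτa, hmA, sub_self, norm_zero]
    exact hε
end

section
/- If m : A → [0,∞) is finitely additive with m(∅)=0 and f : T → X is a bounded m-totally-measurable function, then f is Gould m-integrable. -/
open Set ENNReal

variable {T : Type*}

variable {X : Type*} [NormedAddCommGroup X] [NormedSpace ℝ X]

section Helpers

variable {𝒜 : Set (Set T)} {m : Set T → ℝ}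

lemma alg_univ (h : IsSetAlgebra' 𝒜) : (Set.univ : Set T) ∈ 𝒜 := by
  have := h.2.1 ∅ h.1
  simpa using this

lemma alg_inter (h : IsSetAlgebra' 𝒜) {A B : Set T} (hA : A ∈ 𝒜) (hB : B ∈ 𝒜) :
    A ∩ B ∈ 𝒜 := by
  have : (Aᶜ ∪ Bᶜ)ᶜ ∈ 𝒜 := h.2.1 _ (h.2.2 _ (h.2.1 _ hA) _ (h.2.1 _ hB))
  simpa [Set.compl_union] using this

lemma alg_diff (h : IsSetAlgebra' 𝒜) {A B : Set T} (hA : A ∈ 𝒜) (hB : B ∈ 𝒜) :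
    A \ B ∈ 𝒜 := by
  rw [Set.diff_eq]; exact alg_inter h hA (h.2.1 _ hB)

lemma alg_sUnion (h : IsSetAlgebra' 𝒜) (F : Finset (Set T)) (hF : ∀ A ∈ F, A ∈ 𝒜) :
    ⋃₀ (F : Set (Set T)) ∈ 𝒜 := by
  classical
  induction F using Finset.induction_on with
  | empty => simpa using h.1
  | @insert A s hx ih =>
    rw [Finset.coe_insert, Set.sUnion_insert]
    exact h.2.2 _ (hF A (Finset.mem_insert_self _ _)) _
      (ih fun B hB => hF B (Finset.mem_insert_of_mem hB))

lemma m_mono (h : IsSetAlgebra' 𝒜) (hpos : ∀ A ∈ 𝒜, 0 ≤ m A) (hadd : FinAddSF m 𝒜)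
    {A B : Set T} (hA : A ∈ 𝒜) (hB : B ∈ 𝒜) (hAB : A ⊆ B) : m A ≤ m B := by
  have h1 : m B = m A + m (B \ A) := by
    rw [← hadd A hA (B \ A) (alg_diff h hB hA) disjoint_sdiff_right,
      Set.union_diff_cancel hAB]
  have := hpos _ (alg_diff h hB hA)
  linarith

lemma m_finadd (h : IsSetAlgebra' 𝒜) (h0 : m ∅ = 0) (hadd : FinAddSF m 𝒜)
    (F : Finset (Set T))
    (hF : ∀ A ∈ F, A ∈ 𝒜) (hd : (F : Set (Set T)).PairwiseDisjoint id) :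
    m (⋃₀ (F : Set (Set T))) = ∑ A ∈ F, m A := by
  classical
  induction F using Finset.induction_on with
  | empty => simpa using h0
  | @insert A s hx ih =>
    have hA : A ∈ 𝒜 := hF A (Finset.mem_insert_self _ _)
    have hs : ∀ B ∈ s, B ∈ 𝒜 := fun B hB => hF B (Finset.mem_insert_of_mem hB)
    have hds : (s : Set (Set T)).PairwiseDisjoint id :=
      hd.subset (by simp [Finset.coe_insert, Set.subset_insert])
    have hdisj : Disjoint A (⋃₀ (s : Set (Set T))) := by
      rw [Set.disjoint_sUnion_right]
      intro B hB
      exact hd (by simp) (by simp [hB]) (by rintro rfl; exact hx (by exact_mod_cast hB))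
    rw [Finset.coe_insert, Set.sUnion_insert,
      hadd A hA _ (alg_sUnion h s hs) hdisj, ih hs hds,
      Finset.sum_insert hx]

lemma var_bound (hpos : ∀ A ∈ 𝒜, 0 ≤ m A) {A₀ : Set T} {ε : ℝ} (hε : 0 < ε)
    (hvar : variationSF m 𝒜 A₀ < ENNReal.ofReal ε)
    (G : Finset (Set T)) (hG : ∀ B ∈ G, B ∈ 𝒜 ∧ B ⊆ A₀)
    (hd : (G : Set (Set T)).PairwiseDisjoint id) :
    ∑ B ∈ G, m B < ε := by
  have hmem : G ∈ {F : Finset (Set T) |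
      (∀ A ∈ F, A ∈ 𝒜 ∧ A ⊆ A₀) ∧ (F : Set (Set T)).PairwiseDisjoint id} := ⟨hG, hd⟩
  have hle : ∑ B ∈ G, ENNReal.ofReal (m B) ≤ variationSF m 𝒜 A₀ :=
    le_biSup (fun F => ∑ A ∈ F, ENNReal.ofReal (m A)) hmem
  have : ENNReal.ofReal (∑ B ∈ G, m B) < ENNReal.ofReal ε := by
    rw [ENNReal.ofReal_sum_of_nonneg (fun B hB => hpos B (hG B hB).1)]
    exact lt_of_le_of_lt hle hvar
  exact (ENNReal.ofReal_lt_ofReal_iff hε).mp this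

end Helpers
section Refine

variable {𝒜 : Set (Set T)}

open Classical in
noncomputable def commonRef (P Q : Finset (Set T)) : Finset (Set T) :=
  ((P ×ˢ Q).image fun p => p.1 ∩ p.2).filter fun s => s.Nonempty

lemma commonRef_mem {P Q : Finset (Set T)} {s : Set T} :
    s ∈ commonRef P Q ↔ (∃ C ∈ P, ∃ D ∈ Q, s = C ∩ D) ∧ s.Nonempty := by
  classical
  simp only [commonRef, Finset.mem_filter, Finset.mem_image, Finset.mem_product]
  constructor
  · rintro ⟨⟨⟨C, D⟩, ⟨hC, hD⟩, rfl⟩, hne⟩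
    exact ⟨⟨C, hC, D, hD, rfl⟩, hne⟩
  · rintro ⟨⟨C, hC, D, hD, rfl⟩, hne⟩
    exact ⟨⟨⟨C, D⟩, ⟨hC, hD⟩, rfl⟩, hne⟩

lemma commonRef_spec (h : IsSetAlgebra' 𝒜) {A : Set T} {P Q : Finset (Set T)}
    (hP : IsPartitionOf 𝒜 A P) (hQ : IsPartitionOf 𝒜 A Q) :
    IsPartitionOf 𝒜 A (commonRef P Q) ∧ RefinesPart P (commonRef P Q) ∧
      RefinesPart Q (commonRef P Q) := by
  obtain ⟨hP1, hP2, hP3⟩ := hP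
  obtain ⟨hQ1, hQ2, hQ3⟩ := hQ
  refine ⟨⟨?_, ?_, ?_⟩, ?_, ?_⟩
  · intro B hB
    obtain ⟨⟨C, hC, D, hD, rfl⟩, hne⟩ := commonRef_mem.mp hB
    exact ⟨alg_inter h (hP1 C hC).1 (hQ1 D hD).1, hne,
      (Set.inter_subset_left).trans (hP1 C hC).2.2⟩
  · intro s hs t ht hst
    obtain ⟨⟨C1, hC1, D1, hD1, rfl⟩, -⟩ := commonRef_mem.mp hs
    obtain ⟨⟨C2, hC2, D2, hD2, rfl⟩, -⟩ := commonRef_mem.mp ht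
    by_cases hC : C1 = C2
    · by_cases hD : D1 = D2
      · exact absurd (by rw [hC, hD]) hst
      · have := hQ2 hD1 hD2 hD
        exact Set.disjoint_of_subset Set.inter_subset_right Set.inter_subset_right this
    · have := hP2 hC1 hC2 hC
      exact Set.disjoint_of_subset Set.inter_subset_left Set.inter_subset_left this
  · ext x
    simp only [Set.mem_sUnion, Finset.mem_coe]
    constructor
    · rintro ⟨B, hB, hx⟩
      obtain ⟨⟨C, hC, D, hD, rfl⟩, -⟩ := commonRef_mem.mp hB
      exact (hP1 C hC).2.2 hx.1
    · intro hx
      obtain ⟨C, hC, hxC⟩ : ∃ C ∈ P, x ∈ C := by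
        have : x ∈ ⋃₀ (P : Set (Set T)) := hP3 ▸ hx
        simpa using this
      obtain ⟨D, hD, hxD⟩ : ∃ D ∈ Q, x ∈ D := by
        have : x ∈ ⋃₀ (Q : Set (Set T)) := hQ3 ▸ hx
        simpa using this
      exact ⟨C ∩ D, commonRef_mem.mpr ⟨⟨C, hC, D, hD, rfl⟩, ⟨x, hxC, hxD⟩⟩, hxC, hxD⟩
  · intro B hB
    obtain ⟨⟨C, hC, D, hD, rfl⟩, -⟩ := commonRef_mem.mp hB
    exact ⟨C, hC, Set.inter_subset_left⟩
  · intro B hB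
    obtain ⟨⟨C, hC, D, hD, rfl⟩, -⟩ := commonRef_mem.mp hB
    exact ⟨D, hD, Set.inter_subset_right⟩

end Refine
section Est

variable {𝒜 : Set (Set T)} {m : Set T → ℝ} {X : Type*} [NormedAddCommGroup X]
  [NormedSpace ℝ X]

lemma main_est [Nonempty T] (halg : IsSetAlgebra' 𝒜) (h0 : m ∅ = 0)
    (hpos : ∀ A ∈ 𝒜, 0 ≤ m A) (hadd : FinAddSF m 𝒜) (f : T → X) {M : ℝ}
    (hM0 : 0 ≤ M) (hbdd : ∀ t : T, ‖f t‖ ≤ M)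
    (hmeas : TotallyMeasurableOn m 𝒜 f Set.univ) {ε : ℝ} (hε : 0 < ε) :
    ∃ P₀ : Finset (Set T), ∃ v : X, IsPartitionOf 𝒜 Set.univ P₀ ∧
      ∀ P, IsPartitionOf 𝒜 Set.univ P → RefinesPart P₀ P →
        ∀ τ : Set T → T, (∀ B ∈ P, τ B ∈ B) →
          ‖(∑ B ∈ P, m B • f (τ B)) - v‖ < ε := by
  classical
  have hmU : 0 ≤ m Set.univ := hpos _ (alg_univ halg)
  set D : ℝ := 2 * M + m Set.univ + 1 with hD
  have hDpos : 0 < D := by positivity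
  set ε' : ℝ := ε / D with hε'def
  have hε' : 0 < ε' := div_pos hε hDpos
  obtain ⟨A₀, F, hA₀𝒜, -, hF, hdisj, hcover, hvar, hosc⟩ := hmeas ε' hε'
  set P₀ : Finset (Set T) := if A₀.Nonempty then insert A₀ F else F with hP₀def
  -- basic facts about P₀
  have hP₀part : IsPartitionOf 𝒜 Set.univ P₀ := by
    by_cases h : A₀.Nonempty
    · rw [hP₀def, if_pos h]
      refine ⟨?_, ?_, ?_⟩
      · intro B hB
        rcases Finset.mem_insert.mp hB with rfl | hB
        · exact ⟨hA₀𝒜, h, Set.subset_univ _⟩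
        · exact hF B hB
      · rw [Finset.coe_insert]; exact hdisj
      · rw [Finset.coe_insert, Set.sUnion_insert]; exact hcover
    · have hA₀ : A₀ = ∅ := Set.not_nonempty_iff_eq_empty.mp h
      rw [hP₀def, if_neg h]
      refine ⟨hF, hdisj.subset (Set.subset_insert _ _), ?_⟩
      rw [← hcover, hA₀, Set.empty_union]
  have hP₀F : ∀ C ∈ P₀, C ∉ F → C = A₀ := by
    intro C hC hCF
    by_cases h : A₀.Nonempty
    · rw [hP₀def, if_pos h] at hC
      rcases Finset.mem_insert.mp hC with rfl | hC
      · rfl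
      · exact absurd hC hCF
    · rw [hP₀def, if_neg h] at hC; exact absurd hC hCF
  obtain ⟨hP₀mem, hP₀disj, hP₀union⟩ := hP₀part
  -- tag points for P₀
  set pt : Set T → T := fun C => if h : C.Nonempty then h.some else Classical.arbitrary T
    with hptdef
  have hpt : ∀ C ∈ P₀, pt C ∈ C := by
    intro C hC
    have h := (hP₀mem C hC).2.1
    rw [hptdef]; simp only [dif_pos h]; exact h.some_mem
  refine ⟨P₀, ∑ C ∈ P₀, m C • f (pt C), ⟨hP₀mem, hP₀disj, hP₀union⟩, ?_⟩
  intro P hP href τ hτ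
  obtain ⟨hPmem, hPdisj, hPunion⟩ := hP
  -- the assignment map
  set g : Set T → Set T := fun B => if h : ∃ C ∈ P₀, B ⊆ C then h.choose else ∅ with hgdef
  have hg : ∀ B ∈ P, g B ∈ P₀ ∧ B ⊆ g B := by
    intro B hB
    have h := href B hB
    rw [hgdef]; simp only [dif_pos h]
    obtain ⟨h1, h2⟩ := h.choose_spec
    exact ⟨h1, h2⟩
  -- fiberwise decomposition
  have hfib : ∑ C ∈ P₀, ∑ B ∈ P.filter (fun B => g B = C), m B • f (τ B)
      = ∑ B ∈ P, m B • f (τ B) :=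
    Finset.sum_fiberwise_of_maps_to (fun B hB => (hg B hB).1) _
  -- per-fiber facts
  have hfiber : ∀ C ∈ P₀, (⋃₀ ((P.filter (fun B => g B = C)) : Set (Set T)) = C) := by
    intro C hC
    apply Set.Subset.antisymm
    · intro x hx
      obtain ⟨B, hB, hxB⟩ := hx
      simp only [Finset.coe_filter, Set.mem_setOf_eq] at hB
      exact hB.2 ▸ (hg B hB.1).2 hxB
    · intro x hx
      have hxU : x ∈ ⋃₀ (P : Set (Set T)) := hPunion ▸ Set.mem_univ x
      obtain ⟨B, hB, hxB⟩ := hxU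
      have hB' : B ∈ P := hB
      have hgB : g B = C := by
        by_contra hne
        have hd := hP₀disj (hg B hB').1 hC hne
        exact Set.disjoint_left.mp hd ((hg B hB').2 hxB) hx
      exact ⟨B, by simp [Finset.mem_filter, hB', hgB], hxB⟩
  have hsumC : ∀ C ∈ P₀, ∑ B ∈ P.filter (fun B => g B = C), m B = m C := by
    intro C hC
    have hsub : ((P.filter (fun B => g B = C)) : Set (Set T)) ⊆ (P : Set (Set T)) := by
      intro B hB
      exact Finset.mem_coe.mpr (Finset.mem_filter.mp (Finset.mem_coe.mp hB)).1
    have h1 := m_finadd halg h0 hadd (P.filter (fun B => g B = C))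
      (fun B hB => (hPmem B (Finset.mem_filter.mp hB).1).1)
      (hPdisj.subset hsub)
    rw [hfiber C hC] at h1
    exact h1.symm
  -- the key per-fiber estimate
  have key : ∀ C ∈ P₀,
      ‖(∑ B ∈ P.filter (fun B => g B = C), m B • f (τ B)) - m C • f (pt C)‖
        ≤ (if C ∈ F then ε' * m C else 2 * (M * ε')) := by
    intro C hC
    have hmC0 : 0 ≤ m C := hpos C (hP₀mem C hC).1
    have hBfacts : ∀ B ∈ P.filter (fun B => g B = C), 0 ≤ m B ∧ B ⊆ C := by
      intro B hB
      obtain ⟨hBP, hgB⟩ := Finset.mem_filter.mp hB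
      exact ⟨hpos B (hPmem B hBP).1, hgB ▸ (hg B hBP).2⟩
    by_cases hCF : C ∈ F
    · rw [if_pos hCF]
      have hptC : pt C ∈ C := hpt C hC
      have hrw : (∑ B ∈ P.filter (fun B => g B = C), m B • f (τ B)) - m C • f (pt C)
          = ∑ B ∈ P.filter (fun B => g B = C), (m B • f (τ B) - m B • f (pt C)) := by
        rw [Finset.sum_sub_distrib, ← Finset.sum_smul, hsumC C hC]
      rw [hrw]
      calc ‖∑ B ∈ P.filter (fun B => g B = C), (m B • f (τ B) - m B • f (pt C))‖
          ≤ ∑ B ∈ P.filter (fun B => g B = C), ‖m B • f (τ B) - m B • f (pt C)‖ :=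
            norm_sum_le _ _
        _ ≤ ∑ B ∈ P.filter (fun B => g B = C), m B * ε' := by
            apply Finset.sum_le_sum
            intro B hB
            obtain ⟨hmB0, hBC⟩ := hBfacts B hB
            rw [← smul_sub, norm_smul, Real.norm_eq_abs, abs_of_nonneg hmB0]
            have hτB : τ B ∈ C := hBC (hτ B (Finset.mem_filter.mp hB).1)
            exact mul_le_mul_of_nonneg_left
              (le_of_lt (hosc C hCF (τ B) hτB (pt C) hptC)) hmB0
        _ = (∑ B ∈ P.filter (fun B => g B = C), m B) * ε' := by
            rw [Finset.sum_mul]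
        _ = ε' * m C := by rw [hsumC C hC]; ring
    · rw [if_neg hCF]
      have hCA₀ : C = A₀ := hP₀F C hC hCF
      have hCsub : C ⊆ A₀ := by rw [hCA₀]
      have hsmall : ∑ B ∈ P.filter (fun B => g B = C), m B < ε' := by
        apply var_bound hpos hε' hvar
        · intro B hB
          obtain ⟨hBP, -⟩ := Finset.mem_filter.mp hB
          exact ⟨(hPmem B hBP).1, (hBfacts B hB).2.trans hCsub⟩
        · apply hPdisj.subset
          intro B hB
          exact Finset.mem_coe.mpr (Finset.mem_filter.mp (Finset.mem_coe.mp hB)).1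
      have hmCsmall : m C < ε' := by
        have hs : ∀ B ∈ ({C} : Finset (Set T)), B ∈ 𝒜 ∧ B ⊆ A₀ := by
          intro B hB
          rw [Finset.mem_singleton] at hB
          rw [hB]
          exact ⟨(hP₀mem C hC).1, hCsub⟩
        have := var_bound hpos hε' hvar {C} hs (by simp)
        simpa using this
      calc ‖(∑ B ∈ P.filter (fun B => g B = C), m B • f (τ B)) - m C • f (pt C)‖
          ≤ ‖∑ B ∈ P.filter (fun B => g B = C), m B • f (τ B)‖ + ‖m C • f (pt C)‖ :=
            norm_sub_le _ _
        _ ≤ (∑ B ∈ P.filter (fun B => g B = C), m B * M) + m C * M := by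
            gcongr
            · calc ‖∑ B ∈ P.filter (fun B => g B = C), m B • f (τ B)‖
                  ≤ ∑ B ∈ P.filter (fun B => g B = C), ‖m B • f (τ B)‖ := norm_sum_le _ _
                _ ≤ ∑ B ∈ P.filter (fun B => g B = C), m B * M := by
                    apply Finset.sum_le_sum
                    intro B hB
                    rw [norm_smul, Real.norm_eq_abs, abs_of_nonneg (hBfacts B hB).1]
                    exact mul_le_mul_of_nonneg_left (hbdd _) (hBfacts B hB).1
            · rw [norm_smul, Real.norm_eq_abs, abs_of_nonneg hmC0]
              exact mul_le_mul_of_nonneg_left (hbdd _) hmC0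
        _ ≤ ε' * M + ε' * M := by
            rw [← Finset.sum_mul]
            exact add_le_add (mul_le_mul_of_nonneg_right hsmall.le hM0)
              (mul_le_mul_of_nonneg_right hmCsmall.le hM0)
        _ = 2 * (M * ε') := by ring
  -- total sum over P₀
  have hmuniv : ∑ C ∈ P₀, m C = m Set.univ := by
    have := m_finadd halg h0 hadd P₀ (fun C hC => (hP₀mem C hC).1) hP₀disj
    rw [hP₀union] at this
    exact this.symm
  have hcard : (P₀.filter (fun C => C ∉ F)).card ≤ 1 := by
    have hsub : P₀.filter (fun C => C ∉ F) ⊆ {A₀} := by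
      intro C hC
      obtain ⟨h1, h2⟩ := Finset.mem_filter.mp hC
      rw [Finset.mem_singleton]
      exact hP₀F C h1 h2
    simpa using Finset.card_le_card hsub
  calc ‖(∑ B ∈ P, m B • f (τ B)) - ∑ C ∈ P₀, m C • f (pt C)‖
      = ‖∑ C ∈ P₀, ((∑ B ∈ P.filter (fun B => g B = C), m B • f (τ B))
          - m C • f (pt C))‖ := by rw [Finset.sum_sub_distrib, hfib]
    _ ≤ ∑ C ∈ P₀, ‖(∑ B ∈ P.filter (fun B => g B = C), m B • f (τ B))
          - m C • f (pt C)‖ := norm_sum_le _ _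
    _ ≤ ∑ C ∈ P₀, (if C ∈ F then ε' * m C else 2 * (M * ε')) :=
        Finset.sum_le_sum key
    _ = (∑ C ∈ P₀.filter (fun C => C ∈ F), ε' * m C)
          + ∑ C ∈ P₀.filter (fun C => C ∉ F), 2 * (M * ε') := Finset.sum_ite _ _
    _ ≤ (∑ C ∈ P₀, ε' * m C) + 1 * (2 * (M * ε')) := by
        gcongr ?_ + ?_
        · apply Finset.sum_le_sum_of_subset_of_nonneg (Finset.filter_subset _ _)
          intro C hC _
          exact mul_nonneg (le_of_lt hε') (hpos C (hP₀mem C hC).1)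
        · rw [Finset.sum_const, nsmul_eq_mul]
          apply mul_le_mul_of_nonneg_right _ (by positivity)
          exact_mod_cast hcard
    _ = ε' * (m Set.univ + 2 * M) := by rw [← Finset.mul_sum, hmuniv]; ring
    _ < ε' * D := by
        apply mul_lt_mul_of_pos_left _ hε'
        rw [hD]; linarith
    _ = ε := by rw [hε'def]; field_simp

end Est
/-- A bounded totally measurable function is Gould integrable w.r.t. a finitely
additive `m`. -/
theorem gould_integrable_of_totallyMeasurable [CompleteSpace X]
    (𝒜 : Set (Set T)) (m : Set T → ℝ)
    (halg : IsSetAlgebra' 𝒜) (h0 : m ∅ = 0) (hpos : ∀ A ∈ 𝒜, 0 ≤ m A)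
    (hadd : FinAddSF m 𝒜) (f : T → X)
    (hbdd : ∃ M : ℝ, ∀ t : T, ‖f t‖ ≤ M)
    (hmeas : TotallyMeasurableOn m 𝒜 f Set.univ) :
    GouldIntegrableOn m 𝒜 f Set.univ := by
  classical
  by_cases hT : Nonempty T
  · -- main case
    obtain ⟨M₀, hM₀⟩ := hbdd
    have hM0 : (0:ℝ) ≤ max M₀ 0 := le_max_right _ _
    have hbdd' : ∀ t : T, ‖f t‖ ≤ max M₀ 0 := fun t => (hM₀ t).trans (le_max_left _ _)
    have hεn : ∀ n : ℕ, (0:ℝ) < 1 / (n + 1) := fun n => by positivity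
    choose Pseq vseq hspec using fun n : ℕ =>
      main_est halg h0 hpos hadd f hM0 hbdd' hmeas (hεn n)
    have hpart : ∀ n, IsPartitionOf 𝒜 Set.univ (Pseq n) := fun n => (hspec n).1
    have hest : ∀ n, ∀ P, IsPartitionOf 𝒜 Set.univ P → RefinesPart (Pseq n) P →
        ∀ τ : Set T → T, (∀ B ∈ P, τ B ∈ B) →
          ‖(∑ B ∈ P, m B • f (τ B)) - vseq n‖ < 1 / (n + 1) := fun n => (hspec n).2
    -- comparison of two stages
    have hcomp : ∀ n k : ℕ, ‖vseq n - vseq k‖ < 1 / (n + 1) + 1 / (k + 1) := by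
      intro n k
      set Q := commonRef (Pseq n) (Pseq k) with hQ
      obtain ⟨hQpart, hQn, hQk⟩ := commonRef_spec halg (hpart n) (hpart k)
      set τ : Set T → T := fun B => if h : B.Nonempty then h.some else Classical.arbitrary T
      have hτ : ∀ B ∈ Q, τ B ∈ B := by
        intro B hB
        have h := (hQpart.1 B hB).2.1
        simp only [τ, dif_pos h]
        exact h.some_mem
      have h1 := hest n Q hQpart hQn τ hτ
      have h2 := hest k Q hQpart hQk τ hτ
      have heq : vseq n - vseq k =
          ((∑ B ∈ Q, m B • f (τ B)) - vseq k) - ((∑ B ∈ Q, m B • f (τ B)) - vseq n) := by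
        abel
      rw [heq]
      calc ‖_ - _‖ ≤ ‖(∑ B ∈ Q, m B • f (τ B)) - vseq k‖ +
            ‖(∑ B ∈ Q, m B • f (τ B)) - vseq n‖ := norm_sub_le _ _
        _ < 1 / (k + 1) + 1 / (n + 1) := add_lt_add h2 h1
        _ = 1 / (n + 1) + 1 / (k + 1) := by ring
    -- Cauchy sequence
    have hcauchy : CauchySeq vseq := by
      rw [Metric.cauchySeq_iff']
      intro ε hε
      obtain ⟨N, hN⟩ := exists_nat_one_div_lt (half_pos hε)
      refine ⟨N, fun n hn => ?_⟩
      rw [dist_eq_norm]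
      have h1 : (1:ℝ) / (n + 1) ≤ 1 / (N + 1) := by
        apply one_div_le_one_div_of_le (by positivity)
        have : (N:ℝ) ≤ n := Nat.cast_le.mpr hn
        linarith
      calc ‖vseq n - vseq N‖ < 1 / (n + 1) + 1 / (N + 1) := hcomp n N
        _ ≤ 1 / (N + 1) + 1 / (N + 1) := by linarith
        _ < ε / 2 + ε / 2 := by linarith
        _ = ε := by ring
    obtain ⟨α, hα⟩ := cauchySeq_tendsto_of_complete hcauchy
    refine ⟨α, ?_⟩
    intro ε hε
    obtain ⟨N₁, hN₁⟩ := (Metric.tendsto_atTop.mp hα) (ε / 2) (half_pos hε)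
    obtain ⟨N₂, hN₂⟩ := exists_nat_one_div_lt (half_pos hε)
    set n := max N₁ N₂ with hn
    refine ⟨Pseq n, hpart n, ?_⟩
    intro P hP href τ hτ
    have h1 := hest n P hP href τ hτ
    have h2 : dist (vseq n) α < ε / 2 := hN₁ n (le_max_left _ _)
    rw [dist_eq_norm] at h2
    have h3 : (1:ℝ) / (n + 1) ≤ 1 / (N₂ + 1) := by
      apply one_div_le_one_div_of_le (by positivity)
      have : (N₂:ℝ) ≤ n := Nat.cast_le.mpr (le_max_right _ _)
      linarith
    calc ‖(∑ B ∈ P, m B • f (τ B)) - α‖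
        ≤ ‖(∑ B ∈ P, m B • f (τ B)) - vseq n‖ + ‖vseq n - α‖ := by
          have : (∑ B ∈ P, m B • f (τ B)) - α =
              ((∑ B ∈ P, m B • f (τ B)) - vseq n) + (vseq n - α) := by abel
          rw [this]
          exact norm_add_le _ _
      _ < 1 / (n + 1) + ε / 2 := add_lt_add h1 h2
      _ ≤ 1 / (N₂ + 1) + ε / 2 := by linarith
      _ < ε / 2 + ε / 2 := by linarith
      _ = ε := by ring
  · -- T is empty
    have huniv : (Set.univ : Set T) = ∅ := Set.univ_eq_empty_iff.mpr (not_nonempty_iff.mp hT)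
    refine ⟨0, fun ε hε => ⟨∅, ⟨?_, ?_, ?_⟩, ?_⟩⟩
    · intro B hB; simp at hB
    · simp
    · simp [huniv]
    · intro P hP hre τ hτ
      have hPe : P = ∅ := by
        rw [Finset.eq_empty_iff_forall_notMem]
        intro B hB
        obtain ⟨t, -⟩ := (hP.1 B hB).2.1
        exact hT ⟨t⟩
      simp [hPe, hε]
end

section
/- Let m : A → [0,∞) be null-additive and monotone and A ∈ A an atom of m. If f : T → X is Gould m-integrable on A, then f is m-totally-measurable on A. -/
open Set ENNReal

variable {T : Type*}

variable {X : Type*} [NormedAddCommGroup X] [NormedSpace ℝ X]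

/-!
On an atom `A`, every partition `P` of `A` has a piece `B` with `m (A \ B) = 0`, and then every
member of `𝒜` inside `A \ B` is null. Hence a Riemann sum over `P` tagged at `t ∈ B` equals
`m A • f t`. Taking for `P` the partition that brings Riemann sums within `m A * ε / 2` of the
integral, any two values of `f` on `B` differ by less than `ε`, while `A \ B` has variation zero.
-/

section Atom

variable {𝒜 : Set (Set T)} {m : Set T → ℝ}

theorem IsSetAlgebra'.diff_mem (halg : IsSetAlgebra' 𝒜) {S B : Set T} (hS : S ∈ 𝒜)
    (hB : B ∈ 𝒜) : S \ B ∈ 𝒜 := by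
  obtain ⟨-, hcompl, hunion⟩ := halg
  have h : S \ B = (Sᶜ ∪ B)ᶜ := by ext; simp
  exact h ▸ hcompl _ (hunion _ (hcompl _ hS) _ hB)

theorem NullAddSF.sUnion_mem_and_eq_zero (hnull : NullAddSF m 𝒜) (halg : IsSetAlgebra' 𝒜)
    (h0 : m ∅ = 0) (S : Finset (Set T)) (hS : ∀ B ∈ S, B ∈ 𝒜 ∧ m B = 0) :
    ⋃₀ (S : Set (Set T)) ∈ 𝒜 ∧ m (⋃₀ (S : Set (Set T))) = 0 := by
  classical
  induction S using Finset.induction_on with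
  | empty => simpa using ⟨halg.1, h0⟩
  | insert B S _ ih =>
    obtain ⟨hB𝒜, hBnull⟩ := hS B (Finset.mem_insert_self _ _)
    obtain ⟨hU𝒜, hUnull⟩ := ih fun C hC => hS C (Finset.mem_insert_of_mem hC)
    rw [Finset.coe_insert, sUnion_insert, union_comm]
    exact ⟨halg.2.2 _ hU𝒜 _ hB𝒜, (hnull _ hU𝒜 _ hB𝒜 hBnull).trans hUnull⟩

theorem IsAtomOf.exists_mem_partition_diff_eq_zero {A : Set T} {P : Finset (Set T)}
    (hA : IsAtomOf m 𝒜 A) (hnull : NullAddSF m 𝒜) (halg : IsSetAlgebra' 𝒜) (h0 : m ∅ = 0)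
    (hP : IsPartitionOf 𝒜 A P) : ∃ B ∈ P, m (A \ B) = 0 := by
  by_contra! h
  have hPnull : ∀ B ∈ P, B ∈ 𝒜 ∧ m B = 0 := fun B hB =>
    ⟨(hP.1 B hB).1, (hA.2.2 B (hP.1 B hB).1 (hP.1 B hB).2.2).resolve_right (h B hB)⟩
  have := (hnull.sUnion_mem_and_eq_zero halg h0 P hPnull).2
  rw [hP.2.2] at this
  exact hA.2.1.ne' this

theorem IsAtomOf.eq_of_diff_eq_zero {A B : Set T} (hA : IsAtomOf m 𝒜 A)
    (hnull : NullAddSF m 𝒜) (halg : IsSetAlgebra' 𝒜) (hB : B ∈ 𝒜) (hBA : B ⊆ A)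
    (hAB : m (A \ B) = 0) : m B = m A := by
  have := hnull _ hB _ (halg.diff_mem hA.1 hB) hAB
  rwa [union_sdiff_cancel hBA, eq_comm] at this

/-- If `C` were not null, the atom would make `A \ C` null; together with the null set
`A \ B` it would cover `A`, forcing `m A = 0`. -/
theorem IsAtomOf.eq_zero_of_disjoint {A B C : Set T} (hA : IsAtomOf m 𝒜 A)
    (hnull : NullAddSF m 𝒜) (halg : IsSetAlgebra' 𝒜) (hB : B ∈ 𝒜) (hAB : m (A \ B) = 0)
    (hC : C ∈ 𝒜) (hCA : C ⊆ A) (hCB : Disjoint C B) : m C = 0 := by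
  refine (hA.2.2 C hC hCA).resolve_right fun hAC => hA.2.1.ne' ?_
  have hcover : (A \ C) ∪ (A \ B) = A := by
    rw [← sdiff_inter, hCB.inter_eq, sdiff_empty]
  have := hnull _ (halg.diff_mem hA.1 hC) _ (halg.diff_mem hA.1 hB) hAB
  rwa [hcover, hAC] at this

theorem IsAtomOf.sum_partition_smul {X : Type*} [AddCommGroup X] [Module ℝ X]
    {A B : Set T} {P : Finset (Set T)} (hA : IsAtomOf m 𝒜 A) (hnull : NullAddSF m 𝒜)
    (halg : IsSetAlgebra' 𝒜) (hP : IsPartitionOf 𝒜 A P) (hB : B ∈ P) (hAB : m (A \ B) = 0)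
    (g : Set T → X) : ∑ C ∈ P, m C • g C = m A • g B := by
  have hB𝒜 := (hP.1 B hB).1
  rw [Finset.sum_eq_single_of_mem B hB fun C hC hCB => ?_,
    hA.eq_of_diff_eq_zero hnull halg hB𝒜 (hP.1 B hB).2.2 hAB]
  have hdisj : Disjoint C B := hP.2.1 (Finset.mem_coe.2 hC) (Finset.mem_coe.2 hB) hCB
  rw [hA.eq_zero_of_disjoint hnull halg hB𝒜 hAB (hP.1 C hC).1 (hP.1 C hC).2.2 hdisj, zero_smul]

end Atom

theorem variationSF_eq_zero {𝒜 : Set (Set T)} {m : Set T → ℝ} {E : Set T}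
    (h : ∀ C ∈ 𝒜, C ⊆ E → m C ≤ 0) : variationSF m 𝒜 E = 0 :=
  nonpos_iff_eq_zero.1 <| iSup₂_le fun _ hF =>
    (Finset.sum_eq_zero fun C hC => ofReal_eq_zero.2 (h C (hF.1 C hC).1 (hF.1 C hC).2)).le

theorem exists_tag_eq {P : Finset (Set T)} (hP : ∀ B ∈ P, B.Nonempty) {B₀ : Set T} {t : T}
    (ht : t ∈ B₀) : ∃ τ : Set T → T, τ B₀ = t ∧ ∀ B ∈ P, τ B ∈ B := by
  classical
  refine ⟨Function.update (fun B => if h : B.Nonempty then h.some else t) B₀ t,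
    Function.update_self .., fun B hB => ?_⟩
  rcases eq_or_ne B B₀ with rfl | hne
  · simpa using ht
  · simpa [Function.update_of_ne hne, hP B hB] using (hP B hB).some_mem

theorem norm_sub_lt_of_norm_smul_sub_lt {c ε : ℝ} (hc : 0 < c) {x y α : X}
    (hx : ‖c • x - α‖ < c * ε / 2) (hy : ‖c • y - α‖ < c * ε / 2) : ‖x - y‖ < ε := by
  have : c * ‖x - y‖ < c * ε :=
    calc c * ‖x - y‖ = ‖(c • x - α) - (c • y - α)‖ := by
          rw [sub_sub_sub_cancel_right, ← smul_sub, norm_smul, Real.norm_of_nonneg hc.le]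
      _ ≤ ‖c • x - α‖ + ‖c • y - α‖ := norm_sub_le _ _
      _ < c * ε := by linarith
  exact lt_of_mul_lt_mul_left this hc.le

theorem totallyMeasurableOn_of_forall_exists_subset {X : Type*} [NormedAddCommGroup X]
    {𝒜 : Set (Set T)} {m : Set T → ℝ} {f : T → X} {A : Set T}
    (h : ∀ ε > 0, ∃ B ∈ 𝒜, B.Nonempty ∧ B ⊆ A ∧ A \ B ∈ 𝒜 ∧
      variationSF m 𝒜 (A \ B) < ENNReal.ofReal ε ∧ ∀ t ∈ B, ∀ s ∈ B, ‖f t - f s‖ < ε) :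
    TotallyMeasurableOn m 𝒜 f A := by
  intro ε hε
  obtain ⟨B, hB, hBne, hBA, hAB, hvar, hosc⟩ := h ε hε
  refine ⟨A \ B, {B}, hAB, sdiff_subset, by simpa using ⟨hB, hBne, hBA⟩, ?_,
    by simpa using sdiff_union_of_subset hBA, hvar, by simpa using hosc⟩
  rw [Finset.coe_singleton]
  exact (pairwiseDisjoint_singleton B id).insert fun _ hC _ => (mem_singleton_iff.1 hC) ▸
    disjoint_sdiff_left

theorem totallyMeasurable_on_atom_of_gould_integrable_general
    (𝒜 : Set (Set T)) (m : Set T → ℝ)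
    (halg : IsSetAlgebra' 𝒜) (h0 : m ∅ = 0)
    (hnull : NullAddSF m 𝒜)
    (A : Set T) (hA : IsAtomOf m 𝒜 A) (f : T → X)
    (hint : GouldIntegrableOn m 𝒜 f A) :
    TotallyMeasurableOn m 𝒜 f A := by
  obtain ⟨α, hα⟩ := hint
  have hApos := hA.2.1
  refine totallyMeasurableOn_of_forall_exists_subset fun ε hε => ?_
  obtain ⟨P, hP, hconv⟩ := hα (m A * ε / 2) (by positivity)
  obtain ⟨B, hBP, hAB⟩ := hA.exists_mem_partition_diff_eq_zero hnull halg h0 hP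
  obtain ⟨hB, hBne, hBA⟩ := hP.1 B hBP
  have hnear : ∀ t ∈ B, ‖m A • f t - α‖ < m A * ε / 2 := fun t ht => by
    obtain ⟨τ, rfl, hτ⟩ := exists_tag_eq (fun C hC => (hP.1 C hC).2.1) ht
    have := hconv P hP (fun C hC => ⟨C, hC, subset_rfl⟩) τ hτ
    rwa [hA.sum_partition_smul hnull halg hP hBP hAB fun C => f (τ C)] at this
  have hvar : variationSF m 𝒜 (A \ B) = 0 := variationSF_eq_zero fun C hC hCAB =>
    (hA.eq_zero_of_disjoint hnull halg hB hAB hC (hCAB.trans sdiff_subset)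
      (subset_sdiff.1 hCAB).2).le
  exact ⟨B, hB, hBne, hBA, halg.diff_mem hA.1 hB, hvar ▸ ofReal_pos.2 hε,
    fun t ht s hs => norm_sub_lt_of_norm_smul_sub_lt hApos (hnear t ht) (hnear s hs)⟩

/-- If `m` is null-additive and monotone and `A` is an atom, Gould integrability of
`f` on `A` implies total measurability of `f` on `A`. -/
theorem totallyMeasurable_on_atom_of_gould_integrable
    (𝒜 : Set (Set T)) (m : Set T → ℝ)
    (halg : IsSetAlgebra' 𝒜) (h0 : m ∅ = 0) (hpos : ∀ A ∈ 𝒜, 0 ≤ m A)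
    (hnull : NullAddSF m 𝒜) (hmono : MonoSF m 𝒜)
    (A : Set T) (hA : IsAtomOf m 𝒜 A) (f : T → X)
    (hint : GouldIntegrableOn m 𝒜 f A) :
    TotallyMeasurableOn m 𝒜 f A :=
  totallyMeasurable_on_atom_of_gould_integrable_general 𝒜 m halg h0 hnull A hA f hint
end

section
/- Let A be a σ-algebra, m : A → [0,∞) null-additive, monotone, and finitely purely atomic, and suppose m is such that every atom restricted measure is as above. Then every bounded measurable function f : T → ℝ is Gould m-integrable and m-totally-measurable on T. -/
open Set ENNReal

variable {T : Type*}

variable {X : Type*} [NormedAddCommGroup X] [NormedSpace ℝ X]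

/-! On an atom `A`, a measurable set `{f < u}` is either null or of full measure in `A`, so a
bounded measurable `f` has an essential value `c_A` on `A`: for every `δ > 0` the set
`{|f - c_A| < δ}` has full measure in `A`. Cutting each atom into this set and its null complement
gives a partition on whose non-null pieces `f` oscillates by less than `2δ`; this is total
measurability. Any partition refining it has exactly one non-null piece in each atom `A`, of
measure `m A` and inside `{|f - c_A| < δ}`, so its Riemann sums are within `δ · Σ m A` of
`Σ m A · c_A`. -/

structure IsNullAddMonotone [MeasurableSpace T] (m : Set T → ℝ) : Prop where
  map_empty : m ∅ = 0
  nullAdd : NullAddSF m {s | MeasurableSet s}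
  mono : MonoSF m {s | MeasurableSet s}

namespace IsNullAddMonotone

variable [MeasurableSpace T] {m : Set T → ℝ} {A B : Set T}

theorem nonneg (hm : IsNullAddMonotone m) (hA : MeasurableSet A) : 0 ≤ m A :=
  hm.map_empty ▸ hm.mono ∅ MeasurableSet.empty A hA (empty_subset A)

theorem eq_zero_of_subset (hm : IsNullAddMonotone m) (hA : MeasurableSet A)
    (hB : MeasurableSet B) (hAB : A ⊆ B) (hB0 : m B = 0) : m A = 0 :=
  le_antisymm (hB0 ▸ hm.mono A hA B hB hAB) (hm.nonneg hA)

theorem eq_of_sdiff_eq_zero (hm : IsNullAddMonotone m) (hA : MeasurableSet A)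
    (hB : MeasurableSet B) (hBA : B ⊆ A) (h : m (A \ B) = 0) : m B = m A := by
  simpa [union_sdiff_cancel hBA] using (hm.nullAdd B hB (A \ B) (hA.diff hB) h).symm

theorem sUnion_eq_zero (hm : IsNullAddMonotone m) {Q : Finset (Set T)}
    (hQ : ∀ B ∈ Q, MeasurableSet B ∧ m B = 0) :
    MeasurableSet (⋃₀ (Q : Set (Set T))) ∧ m (⋃₀ (Q : Set (Set T))) = 0 := by
  classical
  induction Q using Finset.induction_on with
  | empty => simpa using hm.map_empty
  | insert B Q _ ih =>
    obtain ⟨hB, hB0⟩ := hQ B (Finset.mem_insert_self B Q)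
    obtain ⟨hQ', hQ0⟩ := ih fun C hC => hQ C (Finset.mem_insert_of_mem hC)
    rw [Finset.coe_insert, sUnion_insert, union_comm]
    exact ⟨hQ'.union hB, (hm.nullAdd _ hQ' _ hB hB0).trans hQ0⟩

theorem variationSF_eq_zero (hm : IsNullAddMonotone m) (hA : MeasurableSet A) (hA0 : m A = 0) :
    variationSF m {s | MeasurableSet s} A = 0 :=
  le_antisymm (iSup₂_le fun Q hQ => (Finset.sum_eq_zero fun B hB => by
    rw [hm.eq_zero_of_subset (hQ.1 B hB).1 hA (hQ.1 B hB).2 hA0, ENNReal.ofReal_zero]).le)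
    zero_le

end IsNullAddMonotone

section Partitions

variable {𝒜 : Set (Set T)} {S A B : Set T} {F P : Finset (Set T)}

theorem RefinesPart.trans {Q : Finset (Set T)} (hFP : RefinesPart F P) (hPQ : RefinesPart P Q) :
    RefinesPart F Q := fun B hB =>
  let ⟨C, hC, hBC⟩ := hPQ B hB
  let ⟨A, hA, hCA⟩ := hFP C hC
  ⟨A, hA, hBC.trans hCA⟩

theorem refinesPart_biUnion [DecidableEq (Set T)] {Q : Set T → Finset (Set T)}
    (hQ : ∀ A ∈ F, ∀ B ∈ Q A, B ⊆ A) : RefinesPart F (F.biUnion Q) := fun B hB =>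
  let ⟨A, hA, hBA⟩ := Finset.mem_biUnion.1 hB
  ⟨A, hA, hQ A hA B hBA⟩

open Classical in
theorem isPartitionOf_pair (hB : B ∈ 𝒜) (hAB : A \ B ∈ 𝒜) (hBA : B ⊆ A) :
    IsPartitionOf 𝒜 A (({B, A \ B} : Finset (Set T)).filter Set.Nonempty) := by
  refine ⟨fun C hC => ?_, fun C hC D hD hCD => ?_, ?_⟩
  · obtain ⟨hC, hne⟩ := Finset.mem_filter.1 hC
    rcases Finset.mem_insert.1 hC with rfl | hC
    · exact ⟨hB, hne, hBA⟩
    · rw [Finset.mem_singleton.1 hC]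
      exact ⟨hAB, Finset.mem_singleton.1 hC ▸ hne, sdiff_subset⟩
  · simp only [Finset.coe_filter, Finset.mem_insert, Finset.mem_singleton, mem_ofPred_eq] at hC hD
    rcases hC.1 with rfl | rfl <;> rcases hD.1 with rfl | rfl
    exacts [(hCD rfl).elim, disjoint_sdiff_right, disjoint_sdiff_left, (hCD rfl).elim]
  · ext t
    simp only [mem_sUnion, Finset.coe_filter, Finset.mem_insert, Finset.mem_singleton,
      mem_ofPred_eq]
    refine ⟨?_, fun ht => ?_⟩
    · rintro ⟨C, ⟨rfl | rfl, -⟩, htC⟩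
      exacts [hBA htC, htC.1]
    · by_cases htB : t ∈ B
      · exact ⟨B, ⟨Or.inl rfl, t, htB⟩, htB⟩
      · exact ⟨A \ B, ⟨Or.inr rfl, t, ht, htB⟩, ht, htB⟩

theorem IsPartitionOf.biUnion [DecidableEq (Set T)] (hF : IsPartitionOf 𝒜 S F)
    {Q : Set T → Finset (Set T)} (hQ : ∀ A ∈ F, IsPartitionOf 𝒜 A (Q A)) :
    IsPartitionOf 𝒜 S (F.biUnion Q) := by
  refine ⟨fun B hB => ?_, fun B hB C hC hBC => ?_, ?_⟩
  · obtain ⟨A, hA, hBA⟩ := Finset.mem_biUnion.1 hB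
    obtain ⟨h𝒜, hne, hsub⟩ := (hQ A hA).1 B hBA
    exact ⟨h𝒜, hne, hsub.trans (hF.1 A hA).2.2⟩
  · obtain ⟨A, hA, hBA⟩ := Finset.mem_biUnion.1 hB
    obtain ⟨A', hA', hCA'⟩ := Finset.mem_biUnion.1 hC
    by_cases hAA' : A = A'
    · subst hAA'
      exact (hQ A hA).2.1 hBA hCA' hBC
    · exact (hF.2.1 hA hA' hAA').mono ((hQ A hA).1 B hBA).2.2 ((hQ A' hA').1 C hCA').2.2
  · refine subset_antisymm (sUnion_subset fun B hB => ?_) fun t ht => ?_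
    · obtain ⟨A, hA, hBA⟩ := Finset.mem_biUnion.1 hB
      exact ((hQ A hA).1 B hBA).2.2.trans (hF.1 A hA).2.2
    · obtain ⟨A, hA, htA⟩ := mem_sUnion.1 (hF.2.2 ▸ ht)
      obtain ⟨B, hB, htB⟩ := mem_sUnion.1 ((hQ A hA).2.2 ▸ htA)
      exact ⟨B, Finset.mem_biUnion.2 ⟨A, hA, hB⟩, htB⟩

open Classical in
theorem IsPartitionOf.filter_subset (hP : IsPartitionOf 𝒜 S P) (hF : IsPartitionOf 𝒜 S F)
    (hFP : RefinesPart F P) (hA : A ∈ F) : IsPartitionOf 𝒜 A (P.filter (· ⊆ A)) := by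
  refine ⟨fun B hB => ?_, hP.2.1.subset (Finset.coe_subset.2 (Finset.filter_subset _ _)), ?_⟩
  · obtain ⟨hBP, hBA⟩ := Finset.mem_filter.1 hB
    exact ⟨(hP.1 B hBP).1, (hP.1 B hBP).2.1, hBA⟩
  · refine subset_antisymm (sUnion_subset fun B hB => (Finset.mem_filter.1 hB).2) fun t ht => ?_
    obtain ⟨B, hBP, htB⟩ := mem_sUnion.1 (hP.2.2 ▸ (hF.1 A hA).2.2 ht)
    obtain ⟨A', hA', hBA'⟩ := hFP B hBP
    obtain rfl : A' = A := hF.2.1.elim_set hA' hA t (hBA' htB) ht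
    exact ⟨B, Finset.mem_filter.2 ⟨hBP, hBA'⟩, htB⟩

open Classical in
theorem IsPartitionOf.sum_eq_sum_sum_filter_subset {β : Type*} [AddCommMonoid β]
    (hP : IsPartitionOf 𝒜 S P) (hF : IsPartitionOf 𝒜 S F) (hFP : RefinesPart F P)
    (g : Set T → β) : ∑ B ∈ P, g B = ∑ A ∈ F, ∑ B ∈ P.filter (· ⊆ A), g B := by
  rw [← Finset.sum_biUnion fun A hA A' hA' hAA' => ?_]
  · congr 1
    ext B
    simp only [Finset.mem_biUnion, Finset.mem_filter]
    refine ⟨fun hB => ?_, fun ⟨_, _, hB, _⟩ => hB⟩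
    obtain ⟨A, hA, hBA⟩ := hFP B hB
    exact ⟨A, hA, hB, hBA⟩
  · refine Finset.disjoint_left.2 fun B hB hB' => hAA' ?_
    obtain ⟨hBP, hBA⟩ := Finset.mem_filter.1 hB
    obtain ⟨t, ht⟩ := (hP.1 B hBP).2.1
    exact hF.2.1.elim_set hA hA' t (hBA ht) ((Finset.mem_filter.1 hB').2 ht)

end Partitions

namespace IsAtomOf

variable {m : Set T → ℝ} {A : Set T}

theorem nonempty {𝒜 : Set (Set T)} (h0 : m ∅ = 0) (hA : IsAtomOf m 𝒜 A) : A.Nonempty :=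
  nonempty_iff_ne_empty.2 fun h => (h ▸ hA.2.1).ne' h0

theorem exists_sum_smul_eq [MeasurableSpace T] {β : Type*} [AddCommGroup β] [Module ℝ β]
    (hm : IsNullAddMonotone m) (hA : IsAtomOf m {s | MeasurableSet s} A)
    {Q : Finset (Set T)} (hQ : IsPartitionOf {s | MeasurableSet s} A Q) (g : Set T → β) :
    ∃ B ∈ Q, m B = m A ∧ ∑ B' ∈ Q, m B' • g B' = m A • g B := by
  obtain ⟨hAmeas, hApos, hAatom⟩ := hA
  obtain ⟨B, hBQ, hB0⟩ : ∃ B ∈ Q, m B ≠ 0 := by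
    by_contra! h
    have hnull := (hm.sUnion_eq_zero fun B hB => ⟨(hQ.1 B hB).1, h B hB⟩).2
    exact hApos.ne' (hQ.2.2 ▸ hnull)
  obtain ⟨hBmeas, -, hBA⟩ := hQ.1 B hBQ
  have hsdiff : m (A \ B) = 0 := (hAatom B hBmeas hBA).resolve_left hB0
  have hmB := hm.eq_of_sdiff_eq_zero hAmeas hBmeas hBA hsdiff
  refine ⟨B, hBQ, hmB, ?_⟩
  rw [Finset.sum_eq_single_of_mem B hBQ fun B' hB' hne => ?_, hmB]
  have hB'sub : B' ⊆ A \ B := subset_sdiff.2 ⟨(hQ.1 B' hB').2.2, hQ.2.1 hB' hBQ hne⟩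
  rw [hm.eq_zero_of_subset (hQ.1 B' hB').1 (hAmeas.diff hBmeas) hB'sub hsdiff, zero_smul]

end IsAtomOf

section EssentialValue

variable [MeasurableSpace T] {m : Set T → ℝ} {A : Set T} {f : T → ℝ} {M : ℝ}

/-- On an atom `A` this is the common value of `sup_U inf_U f` and `inf_U sup_U f`, `U` ranging
over the measurable subsets of `A` of full measure. -/
noncomputable def essVal (m : Set T → ℝ) (f : T → ℝ) (A : Set T) : ℝ :=
  sSup {u | m ({t | f t < u} ∩ A) = 0}

theorem eq_zero_of_lt_essVal (hm : IsNullAddMonotone m) (hA : MeasurableSet A)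
    (hf : Measurable f) (hM : ∀ t, |f t| ≤ M) {u : ℝ} (hu : u < essVal m f A) :
    m ({t | f t < u} ∩ A) = 0 := by
  have hbelow : {t | f t < -M} ∩ A = ∅ := eq_empty_of_forall_notMem fun t ht => by
    have hlt : f t < -M := ht.1
    linarith [neg_abs_le (f t), hM t]
  obtain ⟨v, hv, huv⟩ := exists_lt_of_lt_csSup ⟨-M, by simp [hbelow, hm.map_empty]⟩ hu
  exact hm.eq_zero_of_subset ((hf measurableSet_Iio).inter hA) ((hf measurableSet_Iio).inter hA)
    (inter_subset_inter_left _ fun t ht => lt_trans ht huv) hv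

theorem IsAtomOf.sdiff_eq_zero_of_essVal_lt (hA : IsAtomOf m {s | MeasurableSet s} A)
    (hf : Measurable f) (hM : ∀ t, |f t| ≤ M) {u : ℝ} (hu : essVal m f A < u) :
    m (A \ {t | f t < u}) = 0 := by
  have hbdd : BddAbove {u | m ({t | f t < u} ∩ A) = 0} := by
    refine ⟨M, fun v hv => ?_⟩
    by_contra! hMv
    have hall : {t | f t < v} ∩ A = A :=
      inter_eq_self_of_subset_right fun t _ => ((le_abs_self (f t)).trans (hM t)).trans_lt hMv
    rw [mem_ofPred_eq, hall] at hv
    exact hA.2.1.ne' hv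
  have hu' : m ({t | f t < u} ∩ A) ≠ 0 := fun h => (le_csSup hbdd h).not_gt hu
  rw [← sdiff_inter_self_eq_sdiff]
  exact (hA.2.2 _ ((hf measurableSet_Iio).inter hA.1) inter_subset_right).resolve_left hu'

theorem IsAtomOf.sdiff_preimage_ball_eq_zero (hm : IsNullAddMonotone m)
    (hA : IsAtomOf m {s | MeasurableSet s} A) (hf : Measurable f) (hM : ∀ t, |f t| ≤ M)
    {δ : ℝ} (hδ : 0 < δ) : m (A \ f ⁻¹' Metric.ball (essVal m f A) δ) = 0 := by
  set c := essVal m f A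
  have hlow := eq_zero_of_lt_essVal hm hA.1 hf hM (u := c - δ / 2) (by linarith)
  have hhigh := hA.sdiff_eq_zero_of_essVal_lt hf hM (u := c + δ) (by linarith)
  have hlow_meas : MeasurableSet ({t | f t < c - δ / 2} ∩ A) := (hf measurableSet_Iio).inter hA.1
  have hhigh_meas : MeasurableSet (A \ {t | f t < c + δ}) := hA.1.diff (hf measurableSet_Iio)
  have hsub : A \ f ⁻¹' Metric.ball c δ ⊆
      ({t | f t < c - δ / 2} ∩ A) ∪ (A \ {t | f t < c + δ}) := by
    rintro t ⟨htA, htc⟩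
    rw [mem_preimage, Metric.mem_ball, Real.dist_eq, not_lt] at htc
    rcases le_abs'.1 htc with h | h
    · exact Or.inl ⟨show f t < c - δ / 2 by linarith, htA⟩
    · exact Or.inr ⟨htA, show ¬f t < c + δ by linarith⟩
  refine hm.eq_zero_of_subset (hA.1.diff (hf measurableSet_ball)) (hlow_meas.union hhigh_meas)
    hsub ?_
  rw [hm.nullAdd _ hlow_meas _ hhigh_meas hhigh, hlow]

end EssentialValue

section FinitelyPurelyAtomic

variable [MeasurableSpace T] {m : Set T → ℝ} {F : Finset (Set T)} {S : Set T}

theorem totallyMeasurableOn_of_forall_exists_partition {E : Type*} [NormedAddCommGroup E]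
    (hm : IsNullAddMonotone m) {f : T → E}
    (h : ∀ ε > 0, ∃ P, IsPartitionOf {s | MeasurableSet s} S P ∧
      ∀ C ∈ P, m C = 0 ∨ ∀ t ∈ C, ∀ s ∈ C, ‖f t - f s‖ < ε) :
    TotallyMeasurableOn m {s | MeasurableSet s} f S := by
  classical
  intro ε hε
  obtain ⟨P, hP, hosc⟩ := h ε hε
  obtain ⟨hA₀, hA₀0⟩ := hm.sUnion_eq_zero (Q := P.filter (m · = 0)) fun B hB =>
    ⟨(hP.1 B (Finset.mem_filter.1 hB).1).1, (Finset.mem_filter.1 hB).2⟩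
  refine ⟨_, P.filter (m · ≠ 0), hA₀,
    sUnion_subset fun B hB => (hP.1 B (Finset.mem_filter.1 hB).1).2.2,
    fun C hC => hP.1 C (Finset.mem_filter.1 hC).1, ?_, ?_, ?_,
    fun C hC => (hosc C (Finset.mem_filter.1 hC).1).resolve_left (Finset.mem_filter.1 hC).2⟩
  · refine pairwiseDisjoint_insert.2
      ⟨hP.2.1.subset (Finset.coe_subset.2 (Finset.filter_subset _ _)),
        fun C hC _ => disjoint_sUnion_left.2 fun B hB => ?_⟩
    obtain ⟨hBP, hB0⟩ := Finset.mem_filter.1 hB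
    obtain ⟨hCP, hC0⟩ := Finset.mem_filter.1 hC
    exact hP.2.1 hBP hCP fun hBC => hC0 (hBC ▸ hB0)
  · rw [← sUnion_union, ← Finset.coe_union, Finset.filter_union_filter_not_eq, hP.2.2]
  · rw [hm.variationSF_eq_zero hA₀ hA₀0]
    exact ENNReal.ofReal_pos.2 hε

theorem hasGouldIntegralOn_of_forall_exists_partition (hm : IsNullAddMonotone m)
    (hatoms : ∀ A ∈ F, IsAtomOf m {s | MeasurableSet s} A)
    (hF : IsPartitionOf {s | MeasurableSet s} S F) (f : T → X) (c : Set T → X)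
    (h : ∀ δ > 0, ∃ P₀, IsPartitionOf {s | MeasurableSet s} S P₀ ∧ RefinesPart F P₀ ∧
      ∀ C ∈ P₀, m C = 0 ∨ ∃ A ∈ F, C ⊆ A ∧ ∀ t ∈ C, dist (f t) (c A) < δ) :
    HasGouldIntegralOn m {s | MeasurableSet s} f S (∑ A ∈ F, m A • c A) := by
  classical
  intro ε hε
  set mass := ∑ A ∈ F, m A
  have hmass : 0 ≤ mass := Finset.sum_nonneg fun A hA => (hatoms A hA).2.1.le
  set δ := ε / (mass + 1)
  obtain ⟨P₀, hP₀, hFP₀, hclose⟩ := h δ (by positivity)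
  refine ⟨P₀, hP₀, fun P hP hP₀P τ hτ => ?_⟩
  have hFP := hFP₀.trans hP₀P
  have hatom : ∀ A ∈ F,
      ‖∑ B ∈ P.filter (· ⊆ A), m B • f (τ B) - m A • c A‖ ≤ m A * δ := by
    intro A hA
    obtain ⟨B, hB, hmB, hsum⟩ := (hatoms A hA).exists_sum_smul_eq hm
      (hP.filter_subset hF hFP hA) (f ∘ τ)
    obtain ⟨hBP, hBA⟩ := Finset.mem_filter.1 hB
    obtain ⟨C, hC, hBC⟩ := hP₀P B hBP
    have hC0 : m C ≠ 0 := fun hC0 => (hatoms A hA).2.1.ne' <| hmB ▸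
      hm.eq_zero_of_subset (hP.1 B hBP).1 (hP₀.1 C hC).1 hBC hC0
    obtain ⟨A', hA', hCA', hA'close⟩ := (hclose C hC).resolve_left hC0
    have hτBC : τ B ∈ C := hBC (hτ B hBP)
    obtain rfl : A = A' := hF.2.1.elim_set hA hA' (τ B) (hBA (hτ B hBP)) (hCA' hτBC)
    simp only [Function.comp_apply] at hsum
    rw [hsum, ← smul_sub, norm_smul, Real.norm_of_nonneg (hatoms A hA).2.1.le, ← dist_eq_norm]
    exact mul_le_mul_of_nonneg_left (hA'close _ hτBC).le (hatoms A hA).2.1.le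
  calc ‖∑ B ∈ P, m B • f (τ B) - ∑ A ∈ F, m A • c A‖
      = ‖∑ A ∈ F, (∑ B ∈ P.filter (· ⊆ A), m B • f (τ B) - m A • c A)‖ := by
        rw [hP.sum_eq_sum_sum_filter_subset hF hFP, Finset.sum_sub_distrib]
    _ ≤ ∑ A ∈ F, m A * δ := (norm_sum_le _ _).trans (Finset.sum_le_sum hatom)
    _ = mass * δ := by rw [Finset.sum_mul]
    _ < ε := by
        rw [mul_div_assoc', div_lt_iff₀ (by positivity)]
        linarith

theorem exists_partition_dist_essVal_lt (hm : IsNullAddMonotone m)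
    (hatoms : ∀ A ∈ F, IsAtomOf m {s | MeasurableSet s} A)
    (hF : IsPartitionOf {s | MeasurableSet s} S F) {f : T → ℝ} (hf : Measurable f) {M : ℝ}
    (hM : ∀ t, |f t| ≤ M) {δ : ℝ} (hδ : 0 < δ) :
    ∃ P₀, IsPartitionOf {s | MeasurableSet s} S P₀ ∧ RefinesPart F P₀ ∧
      ∀ C ∈ P₀, m C = 0 ∨ ∃ A ∈ F, C ⊆ A ∧ ∀ t ∈ C, dist (f t) (essVal m f A) < δ := by
  classical
  set G : Set T → Set T := fun A => A ∩ f ⁻¹' Metric.ball (essVal m f A) δ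
  set Q : Set T → Finset (Set T) :=
    fun A => ({G A, A \ G A} : Finset (Set T)).filter Set.Nonempty
  have hQ : ∀ A ∈ F, IsPartitionOf {s | MeasurableSet s} A (Q A) := fun A hA =>
    have hG : MeasurableSet (G A) := (hatoms A hA).1.inter (hf measurableSet_ball)
    isPartitionOf_pair hG ((hatoms A hA).1.diff hG) inter_subset_left
  refine ⟨F.biUnion Q, hF.biUnion hQ,
    refinesPart_biUnion fun A hA B hB => ((hQ A hA).1 B hB).2.2, fun C hC => ?_⟩
  obtain ⟨A, hA, hCA⟩ := Finset.mem_biUnion.1 hC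
  rcases Finset.mem_insert.1 (Finset.mem_filter.1 hCA).1 with rfl | hC
  · exact Or.inr ⟨A, hA, inter_subset_left, fun t ht => ht.2⟩
  · rw [Finset.mem_singleton.1 hC]
    refine Or.inl ?_
    simpa only [G, sdiff_self_inter] using
      (hatoms A hA).sdiff_preimage_ball_eq_zero hm hf hM hδ

end FinitelyPurelyAtomic

theorem bounded_measurable_gould_integrable_general [MeasurableSpace T] (m : Set T → ℝ)
    (h0 : m ∅ = 0)
    (hnull : NullAddSF m {s : Set T | MeasurableSet s})
    (hmono : MonoSF m {s : Set T | MeasurableSet s})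
    (F : Finset (Set T))
    (hatoms : ∀ A ∈ F, IsAtomOf m {s : Set T | MeasurableSet s} A)
    (hdisj : (F : Set (Set T)).PairwiseDisjoint id)
    (hcover : ⋃₀ (F : Set (Set T)) = Set.univ)
    (f : T → ℝ) (hf : Measurable f) (hbdd : ∃ M : ℝ, ∀ t : T, |f t| ≤ M) :
    GouldIntegrableOn m {s : Set T | MeasurableSet s} f Set.univ ∧
    TotallyMeasurableOn m {s : Set T | MeasurableSet s} f Set.univ := by
  obtain ⟨M, hM⟩ := hbdd
  have hm : IsNullAddMonotone m := ⟨h0, hnull, hmono⟩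
  have hF : IsPartitionOf {s | MeasurableSet s} univ F :=
    ⟨fun A hA => ⟨(hatoms A hA).1, (hatoms A hA).nonempty h0, subset_univ A⟩, hdisj, hcover⟩
  have happrox := fun δ (hδ : 0 < δ) => exists_partition_dist_essVal_lt hm hatoms hF hf hM hδ
  refine ⟨⟨_, hasGouldIntegralOn_of_forall_exists_partition hm hatoms hF f _ happrox⟩,
    totallyMeasurableOn_of_forall_exists_partition hm fun ε hε => ?_⟩
  obtain ⟨P, hP, -, hclose⟩ := happrox (ε / 2) (half_pos hε)
  refine ⟨P, hP, fun C hC => (hclose C hC).imp_right ?_⟩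
  rintro ⟨A, -, -, hA⟩ t ht s hs
  rw [← dist_eq_norm]
  linarith [dist_triangle_right (f t) (f s) (essVal m f A), hA t ht, hA s hs]

/-- On a finitely purely atomic σ-algebra space with null-additive monotone `m`,
every bounded measurable real function is Gould integrable and totally
measurable on `T`. -/
theorem bounded_measurable_gould_integrable [MeasurableSpace T] (m : Set T → ℝ)
    (h0 : m ∅ = 0) (hpos : ∀ A : Set T, MeasurableSet A → 0 ≤ m A)
    (hnull : NullAddSF m {s : Set T | MeasurableSet s})
    (hmono : MonoSF m {s : Set T | MeasurableSet s})
    (F : Finset (Set T))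
    (hatoms : ∀ A ∈ F, IsAtomOf m {s : Set T | MeasurableSet s} A)
    (hdisj : (F : Set (Set T)).PairwiseDisjoint id)
    (hcover : ⋃₀ (F : Set (Set T)) = Set.univ)
    (f : T → ℝ) (hf : Measurable f) (hbdd : ∃ M : ℝ, ∀ t : T, |f t| ≤ M) :
    GouldIntegrableOn m {s : Set T | MeasurableSet s} f Set.univ ∧
    TotallyMeasurableOn m {s : Set T | MeasurableSet s} f Set.univ :=
  bounded_measurable_gould_integrable_general m h0 hnull hmono F hatoms hdisj hcover f hf hbdd
end
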